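/- arXiv:2410.11966 — 16 statements merged into one kernel-verified Lean document; each statement's English description precedes it below -/
import Mathlib

section
/- There do not exist three pairwise distinct min-max nodes of R all having the same first coordinate, nor three pairwise distinct min-max nodes all having the same second coordinate; in other words, every horizontal or vertical grid line contains at most two min-max nodes. -/
/-- Manhattan distance on the grid ℤ × ℤ. -/
def md (u v : ℤ × ℤ) : ℕ := (u.1 - v.1).natAbs + (u.2 - v.2).natAbs

/-- Eccentricity of a grid node with respect to the robot set `R`:
the maximum Manhattan distance from a robot of `R` to the node. -/
def ecc (R : Finset (ℤ × ℤ)) (v : ℤ × ℤ) : ℕ := R.sup (fun u => md u v)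

/-- `v` is a min-max node of `R`. -/
def IsMinMax (R : Finset (ℤ × ℤ)) (v : ℤ × ℤ) : Prop :=
  ∀ v' : ℤ × ℤ, ecc R v ≤ ecc R v'

lemma ecc_convex_vert (R : Finset (ℤ × ℤ)) (x a s b : ℤ) (h1 : a ≤ s) (h2 : s ≤ b) :
    ecc R (x, s) ≤ max (ecc R (x, a)) (ecc R (x, b)) := by
  apply Finset.sup_le
  intro u hu
  have ha := Finset.le_sup (f := fun u => md u (x, a)) hu
  have hb := Finset.le_sup (f := fun u => md u (x, b)) hu
  simp only [ecc, md] at *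
  omega

lemma ecc_convex_horiz (R : Finset (ℤ × ℤ)) (y a s b : ℤ) (h1 : a ≤ s) (h2 : s ≤ b) :
    ecc R (s, y) ≤ max (ecc R (a, y)) (ecc R (b, y)) := by
  apply Finset.sup_le
  intro u hu
  have ha := Finset.le_sup (f := fun u => md u (a, y)) hu
  have hb := Finset.le_sup (f := fun u => md u (b, y)) hu
  simp only [ecc, md] at *
  omega

lemma no_far_vert (R : Finset (ℤ × ℤ)) (hR : R.Nonempty) (x a b : ℤ)
    (hab : a + 2 ≤ b) (ha : IsMinMax R (x, a)) (hb : IsMinMax R (x, b)) : False := by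
  have h1 : ecc R (x, a + 1) = ecc R (x, a) := by
    have := ecc_convex_vert R x a (a + 1) b (by omega) (by omega)
    have h' := ha (x, a + 1)
    have h'' := ha (x, b)
    have h''' := hb (x, a)
    omega
  have h2 : ecc R (x, a + 2) = ecc R (x, a) := by
    have := ecc_convex_vert R x a (a + 2) b (by omega) (by omega)
    have h' := ha (x, a + 2)
    have h'' := ha (x, b)
    have h''' := hb (x, a)
    omega
  obtain ⟨u, hu, hue⟩ := Finset.exists_mem_eq_sup R hR (fun u => md u (x, a + 1))
  have hA := Finset.le_sup (f := fun u => md u (x, a)) hu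
  have hB := Finset.le_sup (f := fun u => md u (x, a + 2)) hu
  simp only [ecc, md] at *
  omega

lemma no_far_horiz (R : Finset (ℤ × ℤ)) (hR : R.Nonempty) (y a b : ℤ)
    (hab : a + 2 ≤ b) (ha : IsMinMax R (a, y)) (hb : IsMinMax R (b, y)) : False := by
  have h1 : ecc R (a + 1, y) = ecc R (a, y) := by
    have := ecc_convex_horiz R y a (a + 1) b (by omega) (by omega)
    have h' := ha (a + 1, y)
    have h'' := ha (b, y)
    have h''' := hb (a, y)
    omega
  have h2 : ecc R (a + 2, y) = ecc R (a, y) := by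
    have := ecc_convex_horiz R y a (a + 2) b (by omega) (by omega)
    have h' := ha (a + 2, y)
    have h'' := ha (b, y)
    have h''' := hb (a, y)
    omega
  obtain ⟨u, hu, hue⟩ := Finset.exists_mem_eq_sup R hR (fun u => md u (a + 1, y))
  have hA := Finset.le_sup (f := fun u => md u (a, y)) hu
  have hB := Finset.le_sup (f := fun u => md u (a + 2, y)) hu
  simp only [ecc, md] at *
  omega

/-- No horizontal or vertical grid line contains three pairwise
distinct min-max nodes of `R`. -/
theorem stmt_2 (R : Finset (ℤ × ℤ)) (hR : R.Nonempty) :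
    (¬ ∃ v₁ v₂ v₃ : ℤ × ℤ, IsMinMax R v₁ ∧ IsMinMax R v₂ ∧ IsMinMax R v₃ ∧
        v₁ ≠ v₂ ∧ v₁ ≠ v₃ ∧ v₂ ≠ v₃ ∧ v₁.1 = v₂.1 ∧ v₂.1 = v₃.1) ∧
    (¬ ∃ v₁ v₂ v₃ : ℤ × ℤ, IsMinMax R v₁ ∧ IsMinMax R v₂ ∧ IsMinMax R v₃ ∧
        v₁ ≠ v₂ ∧ v₁ ≠ v₃ ∧ v₂ ≠ v₃ ∧ v₁.2 = v₂.2 ∧ v₂.2 = v₃.2) := by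
  constructor
  · rintro ⟨⟨x₁, y₁⟩, ⟨x₂, y₂⟩, ⟨x₃, y₃⟩, m1, m2, m3, ne12, ne13, ne23, e12, e13⟩
    dsimp only at e12 e13
    subst e12 e13
    have d12 : y₁ ≠ y₂ := fun h => ne12 (by rw [h])
    have d13 : y₁ ≠ y₃ := fun h => ne13 (by rw [h])
    have d23 : y₂ ≠ y₃ := fun h => ne23 (by rw [h])
    -- two of the three y's differ by at least 2
    rcases le_or_gt y₁ y₂ with h12 | h12 <;> rcases le_or_gt y₂ y₃ with h23 | h23 <;>
      rcases le_or_gt y₁ y₃ with h13 | h13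
    · exact no_far_vert R hR x₁ y₁ y₃ (by omega) m1 m3
    · omega
    · exact no_far_vert R hR x₁ y₁ y₂ (by omega) m1 m2
    · exact no_far_vert R hR x₁ y₃ y₂ (by omega) m3 m2
    · exact no_far_vert R hR x₁ y₂ y₃ (by omega) m2 m3
    · exact no_far_vert R hR x₁ y₂ y₁ (by omega) m2 m1
    · omega
    · exact no_far_vert R hR x₁ y₃ y₁ (by omega) m3 m1
  · rintro ⟨⟨x₁, y₁⟩, ⟨x₂, y₂⟩, ⟨x₃, y₃⟩, m1, m2, m3, ne12, ne13, ne23, e12, e13⟩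
    dsimp only at e12 e13
    subst e12 e13
    have d12 : x₁ ≠ x₂ := fun h => ne12 (by rw [h])
    have d13 : x₁ ≠ x₃ := fun h => ne13 (by rw [h])
    have d23 : x₂ ≠ x₃ := fun h => ne23 (by rw [h])
    rcases le_or_gt x₁ x₂ with h12 | h12 <;> rcases le_or_gt x₂ x₃ with h23 | h23 <;>
      rcases le_or_gt x₁ x₃ with h13 | h13
    · exact no_far_horiz R hR y₁ x₁ x₃ (by omega) m1 m3
    · omega
    · exact no_far_horiz R hR y₁ x₁ x₂ (by omega) m1 m2
    · exact no_far_horiz R hR y₁ x₃ x₂ (by omega) m3 m2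
    · exact no_far_horiz R hR y₁ x₂ x₃ (by omega) m2 m3
    · exact no_far_horiz R hR y₁ x₂ x₁ (by omega) m2 m1
    · omega
    · exact no_far_horiz R hR y₁ x₃ x₁ (by omega) m3 m1
end

section
/- If v and v' are distinct min-max nodes of R lying on a common grid line (i.e., v₁ = v'₁ or v₂ = v'₂), then d(v,v') = 1, i.e., v' is a neighbour of v. -/
lemma key_h (R : Finset (ℤ × ℤ)) (hR : R.Nonempty)
    (v v' : ℤ × ℤ) (hv : IsMinMax R v) (hv' : IsMinMax R v')
    (h2 : v.2 = v'.2) (hlt : v.1 + 2 ≤ v'.1) : False := by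
  set w : ℤ × ℤ := (v.1 + 1, v.2) with hw
  have hub : ∀ u ∈ R, md u w + 1 ≤ ecc R v := by
    intro u hu
    have h1 : md u v ≤ ecc R v := Finset.le_sup (f := fun u => md u v) hu
    have h2' : md u v' ≤ ecc R v' := Finset.le_sup (f := fun u => md u v') hu
    have h3 : ecc R v' ≤ ecc R v := hv' v
    simp only [md, hw] at *
    omega
  obtain ⟨u₀, hu₀⟩ := hR
  have he1 : 1 ≤ ecc R v := le_trans (by omega) (hub u₀ hu₀)
  have hsup : ecc R w ≤ ecc R v - 1 :=
    Finset.sup_le fun u hu => by have := hub u hu; omega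
  have := hv w
  omega

lemma key_v (R : Finset (ℤ × ℤ)) (hR : R.Nonempty)
    (v v' : ℤ × ℤ) (hv : IsMinMax R v) (hv' : IsMinMax R v')
    (h2 : v.1 = v'.1) (hlt : v.2 + 2 ≤ v'.2) : False := by
  set w : ℤ × ℤ := (v.1, v.2 + 1) with hw
  have hub : ∀ u ∈ R, md u w + 1 ≤ ecc R v := by
    intro u hu
    have h1 : md u v ≤ ecc R v := Finset.le_sup (f := fun u => md u v) hu
    have h2' : md u v' ≤ ecc R v' := Finset.le_sup (f := fun u => md u v') hu
    have h3 : ecc R v' ≤ ecc R v := hv' v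
    simp only [md, hw] at *
    omega
  obtain ⟨u₀, hu₀⟩ := hR
  have he1 : 1 ≤ ecc R v := le_trans (by omega) (hub u₀ hu₀)
  have hsup : ecc R w ≤ ecc R v - 1 :=
    Finset.sup_le fun u hu => by have := hub u hu; omega
  have := hv w
  omega

/-- Two distinct min-max nodes of `R` lying on a common grid line
are neighbours, i.e. at Manhattan distance 1. -/
theorem stmt_3 (R : Finset (ℤ × ℤ)) (hR : R.Nonempty)
    (v v' : ℤ × ℤ) (hv : IsMinMax R v) (hv' : IsMinMax R v') (hne : v ≠ v')
    (hline : v.1 = v'.1 ∨ v.2 = v'.2) :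
    md v v' = 1 := by
  have hne' : v.1 ≠ v'.1 ∨ v.2 ≠ v'.2 := by
    by_contra h
    push_neg at h
    exact hne (Prod.ext h.1 h.2)
  rcases hline with h | h
  · have h1 : ¬ (v.2 + 2 ≤ v'.2) := fun hc => key_v R hR v v' hv hv' h hc
    have h2 : ¬ (v'.2 + 2 ≤ v.2) := fun hc => key_v R hR v' v hv' hv h.symm hc
    simp only [md]
    omega
  · have h1 : ¬ (v.1 + 2 ≤ v'.1) := fun hc => key_h R hR v v' hv hv' h hc
    have h2 : ¬ (v'.1 + 2 ≤ v.1) := fun hc => key_h R hR v' v hv' hv h.symm hc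
    simp only [md]
    omega
end

section
/- Suppose c is a grid node with ecc(c) = k (so the radius-k diamond centered at c is a minimal enclosing diamond for R), and exactly one of the four boundaries B_UR(c), B_UL(c), B_DL(c), B_DR(c) contains a robot position while the other three contain none (note this forces every u ∈ R with d(u,c) = k to lie strictly inside one quadrant relative to c). Then the two neighbours of c nearest to the occupied boundary are min-max nodes and the other two neighbours of c are not min-max nodes. For example, if the occupied boundary is B_UR(c) (so every u ∈ R with d(u,c) = k satisfies u₁ > c₁ and u₂ > c₂, and at least one such u exists), then c+(1,0) and c+(0,1) are min-max nodes while c+(−1,0) and c+(0,−1) are not. -/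
lemma le_ecc {R : Finset (ℤ × ℤ)} {u v : ℤ × ℤ} (hu : u ∈ R) : md u v ≤ ecc R v :=
  Finset.le_sup (f := fun u => md u v) hu

lemma ecc_le {R : Finset (ℤ × ℤ)} {v : ℤ × ℤ} {n : ℕ} (h : ∀ u ∈ R, md u v ≤ n) :
    ecc R v ≤ n := Finset.sup_le h

/-- If the radius-`k` diamond centered at `c` is a minimal enclosing
diamond for `R` and only the boundary `B_UR(c)` contains robot positions (so every
`u ∈ R` with `d(u,c) = k` satisfies `u₁ > c₁` and `u₂ > c₂`, and at least one such
`u` exists), then `c+(1,0)` and `c+(0,1)` are min-max nodes while `c+(−1,0)` and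
`c+(0,−1)` are not. -/
theorem stmt_4 (R : Finset (ℤ × ℤ)) (hR : R.Nonempty) (k : ℕ)
    (hk : IsLeast {n : ℕ | ∃ c : ℤ × ℤ, ∀ u ∈ R, md u c ≤ n} k)
    (c : ℤ × ℤ) (hecc : ecc R c = k)
    (hocc : ∀ u ∈ R, md u c = k → c.1 < u.1 ∧ c.2 < u.2)
    (hex : ∃ u ∈ R, md u c = k) :
    IsMinMax R (c.1 + 1, c.2) ∧ IsMinMax R (c.1, c.2 + 1) ∧
    ¬ IsMinMax R (c.1 - 1, c.2) ∧ ¬ IsMinMax R (c.1, c.2 - 1) := by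
  have hub : ∀ u ∈ R, md u c ≤ k := by
    intro u hu; rw [← hecc]; exact le_ecc hu
  have hge : ∀ v, k ≤ ecc R v := fun v =>
    hk.2 ⟨v, fun u hu => le_ecc hu⟩
  have h1 : ecc R (c.1 + 1, c.2) ≤ k := by
    apply ecc_le
    intro u hu
    have h := hub u hu
    by_cases hk' : md u c = k
    · have hq := hocc u hu hk'
      simp only [md] at hk' ⊢
      omega
    · simp only [md] at h hk' ⊢
      omega
  have h2 : ecc R (c.1, c.2 + 1) ≤ k := by
    apply ecc_le
    intro u hu
    have h := hub u hu
    by_cases hk' : md u c = k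
    · have hq := hocc u hu hk'
      simp only [md] at hk' ⊢
      omega
    · simp only [md] at h hk' ⊢
      omega
  obtain ⟨u0, hu0, hmd0⟩ := hex
  have hq0 := hocc u0 hu0 hmd0
  have h3 : k + 1 ≤ ecc R (c.1 - 1, c.2) := by
    have : k + 1 ≤ md u0 (c.1 - 1, c.2) := by
      simp only [md] at hmd0 ⊢; omega
    exact this.trans (le_ecc hu0)
  have h4 : k + 1 ≤ ecc R (c.1, c.2 - 1) := by
    have : k + 1 ≤ md u0 (c.1, c.2 - 1) := by
      simp only [md] at hmd0 ⊢; omega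
    exact this.trans (le_ecc hu0)
  refine ⟨fun v' => (h1.trans (hge v')), fun v' => (h2.trans (hge v')), ?_, ?_⟩
  · intro h
    have := h (c.1 + 1, c.2)
    omega
  · intro h
    have := h (c.1 + 1, c.2)
    omega
end

section
/- Suppose c is a grid node with ecc(c) = k (so the radius-k diamond centered at c is a minimal enclosing diamond for R), and exactly two boundaries B₁ and B₂ of this diamond contain robot positions, where B₁ and B₂ are adjacent boundaries. Then exactly one neighbour of c is a min-max node, namely the neighbour of c nearest to the common corner B₁ ∩ B₂. For example, if B₁ = B_UL(c) and B₂ = B_UR(c) (so every u ∈ R with d(u,c) = k satisfies u₂ > c₂, and there exist such u with u₁ ≤ c₁ and such u with u₁ ≥ c₁), then c+(0,1) is a min-max node and c+(1,0), c+(−1,0), c+(0,−1) are not. -/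
/-- If the radius-`k` diamond centered at `c` is a minimal enclosing
diamond for `R` and exactly the two adjacent boundaries `B_UL(c)` and `B_UR(c)`
contain robot positions (so every `u ∈ R` with `d(u,c) = k` satisfies `u₂ > c₂`,
and there exist such `u` with `u₁ ≤ c₁` and such `u` with `u₁ ≥ c₁`), then among
the neighbours of `c` exactly `c+(0,1)`, the one nearest to the common corner, is
a min-max node. -/
theorem stmt_5 (R : Finset (ℤ × ℤ)) (hR : R.Nonempty) (k : ℕ)
    (hk : IsLeast {n : ℕ | ∃ c : ℤ × ℤ, ∀ u ∈ R, md u c ≤ n} k)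
    (c : ℤ × ℤ) (hecc : ecc R c = k)
    (hocc : ∀ u ∈ R, md u c = k → c.2 < u.2)
    (hUL : ∃ u ∈ R, md u c = k ∧ u.1 ≤ c.1)
    (hUR : ∃ u ∈ R, md u c = k ∧ c.1 ≤ u.1) :
    IsMinMax R (c.1, c.2 + 1) ∧
    ¬ IsMinMax R (c.1 + 1, c.2) ∧ ¬ IsMinMax R (c.1 - 1, c.2) ∧
    ¬ IsMinMax R (c.1, c.2 - 1) := by
  have hub : ∀ u ∈ R, md u c ≤ k := fun u hu => hecc ▸ Finset.le_sup (f := fun u => md u c) hu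
  have hkle : ∀ v : ℤ × ℤ, k ≤ ecc R v := fun v =>
    hk.2 ⟨v, fun u hu => Finset.le_sup (f := fun u => md u v) hu⟩
  have hup : ecc R (c.1, c.2 + 1) ≤ k := by
    apply Finset.sup_le
    intro u hu
    rcases (hub u hu).lt_or_eq with h | h
    · simp only [md] at *; omega
    · have h2 := hocc u hu h
      simp only [md] at *; omega
  refine ⟨fun v => hup.trans (hkle v), ?_, ?_, ?_⟩
  · obtain ⟨u, hu, hd, hx⟩ := hUL
    have hy := hocc u hu hd
    intro hM
    have h1 := hM (c.1, c.2 + 1)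
    have h2 : md u (c.1 + 1, c.2) ≤ ecc R (c.1 + 1, c.2) :=
      Finset.le_sup (f := fun u => md u (c.1 + 1, c.2)) hu
    simp only [md] at *; omega
  · obtain ⟨u, hu, hd, hx⟩ := hUR
    have hy := hocc u hu hd
    intro hM
    have h1 := hM (c.1, c.2 + 1)
    have h2 : md u (c.1 - 1, c.2) ≤ ecc R (c.1 - 1, c.2) :=
      Finset.le_sup (f := fun u => md u (c.1 - 1, c.2)) hu
    simp only [md] at *; omega
  · obtain ⟨u, hu, hd, hx⟩ := hUL
    have hy := hocc u hu hd
    intro hM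
    have h1 := hM (c.1, c.2 + 1)
    have h2 : md u (c.1, c.2 - 1) ≤ ecc R (c.1, c.2 - 1) :=
      Finset.le_sup (f := fun u => md u (c.1, c.2 - 1)) hu
    simp only [md] at *; omega
end

section
/- Let v be a min-max node of R (so ecc(v) = k where k is the minimal enclosing radius). The following are equivalent: (1) no neighbour of v is a min-max node; (2) a pair of opposite boundaries of the radius-k diamond centered at v both contain robot positions, i.e., either both B_UR(v) and B_DL(v) intersect R, or both B_UL(v) and B_DR(v) intersect R. -/
/-- For a min-max node `v` of `R` (with `k` the minimal enclosing
radius), no neighbour of `v` is a min-max node iff a pair of opposite boundaries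
of the radius-`k` diamond centered at `v` both contain robot positions. -/
theorem stmt_6 (R : Finset (ℤ × ℤ)) (hR : R.Nonempty) (k : ℕ)
    (hk : IsLeast {n : ℕ | ∃ c : ℤ × ℤ, ∀ u ∈ R, md u c ≤ n} k)
    (v : ℤ × ℤ) (hv : IsMinMax R v) :
    (∀ v' : ℤ × ℤ, md v' v = 1 → ¬ IsMinMax R v') ↔
      (((∃ u ∈ R, md u v = k ∧ v.1 ≤ u.1 ∧ v.2 ≤ u.2) ∧
        (∃ u ∈ R, md u v = k ∧ u.1 ≤ v.1 ∧ u.2 ≤ v.2)) ∨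
       ((∃ u ∈ R, md u v = k ∧ u.1 ≤ v.1 ∧ v.2 ≤ u.2) ∧
        (∃ u ∈ R, md u v = k ∧ v.1 ≤ u.1 ∧ u.2 ≤ v.2))) := by
  have hk_le : ∀ w : ℤ × ℤ, k ≤ ecc R w := fun w =>
    hk.2 ⟨w, fun u hu => Finset.le_sup (f := fun u => md u w) hu⟩
  have heccv : ecc R v = k := by
    obtain ⟨c, hc⟩ := hk.1
    exact le_antisymm (le_trans (hv c) (Finset.sup_le hc)) (hk_le v)
  have hmd_le : ∀ u ∈ R, md u v ≤ k := fun u hu =>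
    heccv ▸ Finset.le_sup (f := fun u => md u v) hu
  have hnot : ∀ w : ℤ × ℤ, ¬ IsMinMax R w ↔ ∃ u ∈ R, k < md u w := by
    intro w
    constructor
    · intro h
      by_contra hc
      push_neg at hc
      exact h fun v' => le_trans (Finset.sup_le fun u hu => hc u hu) (hk_le v')
    · rintro ⟨u, hu, hku⟩ hmm
      have h1 := hmm v
      have h2 : md u w ≤ k := heccv ▸ le_trans (Finset.le_sup (f := fun u => md u w) hu) h1
      omega
  constructor
  · intro h
    obtain ⟨a, ha, hka⟩ := (hnot _).mp (h (v.1 + 1, v.2) (by simp only [md]; omega))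
    obtain ⟨b, hb, hkb⟩ := (hnot _).mp (h (v.1 - 1, v.2) (by simp only [md]; omega))
    obtain ⟨c, hc, hkc⟩ := (hnot _).mp (h (v.1, v.2 + 1) (by simp only [md]; omega))
    obtain ⟨d, hd, hkd⟩ := (hnot _).mp (h (v.1, v.2 - 1) (by simp only [md]; omega))
    have haL : md a v = k ∧ a.1 ≤ v.1 := by
      have := hmd_le a ha; simp only [md] at this hka ⊢; omega
    have hbR : md b v = k ∧ v.1 ≤ b.1 := by
      have := hmd_le b hb; simp only [md] at this hkb ⊢; omega
    have hcD : md c v = k ∧ c.2 ≤ v.2 := by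
      have := hmd_le c hc; simp only [md] at this hkc ⊢; omega
    have hdU : md d v = k ∧ v.2 ≤ d.2 := by
      have := hmd_le d hd; simp only [md] at this hkd ⊢; omega
    have hA : (∃ u ∈ R, md u v = k ∧ u.1 ≤ v.1 ∧ v.2 ≤ u.2) ∨
        (∃ u ∈ R, md u v = k ∧ u.1 ≤ v.1 ∧ u.2 ≤ v.2) := by
      rcases le_total v.2 a.2 with h' | h'
      · exact Or.inl ⟨a, ha, haL.1, haL.2, h'⟩
      · exact Or.inr ⟨a, ha, haL.1, haL.2, h'⟩
    have hB : (∃ u ∈ R, md u v = k ∧ v.1 ≤ u.1 ∧ v.2 ≤ u.2) ∨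
        (∃ u ∈ R, md u v = k ∧ v.1 ≤ u.1 ∧ u.2 ≤ v.2) := by
      rcases le_total v.2 b.2 with h' | h'
      · exact Or.inl ⟨b, hb, hbR.1, hbR.2, h'⟩
      · exact Or.inr ⟨b, hb, hbR.1, hbR.2, h'⟩
    have hC : (∃ u ∈ R, md u v = k ∧ u.1 ≤ v.1 ∧ u.2 ≤ v.2) ∨
        (∃ u ∈ R, md u v = k ∧ v.1 ≤ u.1 ∧ u.2 ≤ v.2) := by
      rcases le_total c.1 v.1 with h' | h'
      · exact Or.inl ⟨c, hc, hcD.1, h', hcD.2⟩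
      · exact Or.inr ⟨c, hc, hcD.1, h', hcD.2⟩
    have hD : (∃ u ∈ R, md u v = k ∧ u.1 ≤ v.1 ∧ v.2 ≤ u.2) ∨
        (∃ u ∈ R, md u v = k ∧ v.1 ≤ u.1 ∧ v.2 ≤ u.2) := by
      rcases le_total d.1 v.1 with h' | h'
      · exact Or.inl ⟨d, hd, hdU.1, h', hdU.2⟩
      · exact Or.inr ⟨d, hd, hdU.1, h', hdU.2⟩
    rcases hB with hur | hdr
    · rcases hC with hdl | hdr'
      · exact Or.inl ⟨hur, hdl⟩
      · rcases hA with hul | hdl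
        · exact Or.inr ⟨hul, hdr'⟩
        · exact Or.inl ⟨hur, hdl⟩
    · rcases hD with hul | hur
      · exact Or.inr ⟨hul, hdr⟩
      · rcases hA with hul | hdl
        · exact Or.inr ⟨hul, hdr⟩
        · exact Or.inl ⟨hur, hdl⟩
  · rintro hcase v' h1
    rw [hnot]
    have hco : (v'.1 = v.1 + 1 ∧ v'.2 = v.2) ∨ (v'.1 = v.1 - 1 ∧ v'.2 = v.2) ∨
        (v'.1 = v.1 ∧ v'.2 = v.2 + 1) ∨ (v'.1 = v.1 ∧ v'.2 = v.2 - 1) := by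
      simp only [md] at h1; omega
    rcases hcase with ⟨⟨p, hp, hpk, hp1, hp2⟩, ⟨q, hq, hqk, hq1, hq2⟩⟩ |
      ⟨⟨p, hp, hpk, hp1, hp2⟩, ⟨q, hq, hqk, hq1, hq2⟩⟩
    · rcases hco with ⟨e1, e2⟩ | ⟨e1, e2⟩ | ⟨e1, e2⟩ | ⟨e1, e2⟩
      · exact ⟨q, hq, by simp only [md] at hqk ⊢; omega⟩
      · exact ⟨p, hp, by simp only [md] at hpk ⊢; omega⟩
      · exact ⟨q, hq, by simp only [md] at hqk ⊢; omega⟩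
      · exact ⟨p, hp, by simp only [md] at hpk ⊢; omega⟩
    · rcases hco with ⟨e1, e2⟩ | ⟨e1, e2⟩ | ⟨e1, e2⟩ | ⟨e1, e2⟩
      · exact ⟨p, hp, by simp only [md] at hpk ⊢; omega⟩
      · exact ⟨q, hq, by simp only [md] at hqk ⊢; omega⟩
      · exact ⟨q, hq, by simp only [md] at hqk ⊢; omega⟩
      · exact ⟨p, hp, by simp only [md] at hpk ⊢; omega⟩
end

section
/- If there is a grid node c with ecc(c) = k (so the radius-k diamond centered at c is a minimal enclosing diamond for R) such that exactly three of the four boundaries contain robot positions, and for the remaining boundary B (which contains no robot position) there exists a robot u ∈ R with d(u,c) = k − 1 lying in the closed quadrant of B (e.g., if B = B_DR(c), some u ∈ R satisfies d(u,c) = k − 1, u₁ ≥ c₁ and u₂ ≤ c₂), then V_M(R) = {c}, i.e., c is the unique min-max node of R. -/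
/-- The closed quadrant of the boundary indexed by `i` (0 = UR, 1 = UL, 2 = DL,
3 = DR) of a diamond centered at `c`. -/
def inQuad (i : Fin 4) (c u : ℤ × ℤ) : Prop :=
  match i with
  | 0 => c.1 ≤ u.1 ∧ c.2 ≤ u.2
  | 1 => u.1 ≤ c.1 ∧ c.2 ≤ u.2
  | 2 => u.1 ≤ c.1 ∧ u.2 ≤ c.2
  | 3 => c.1 ≤ u.1 ∧ u.2 ≤ c.2

/-- The boundary indexed by `i` of the radius-`k` diamond centered at `c`
contains a robot position of `R`. -/
def bdryOcc (R : Finset (ℤ × ℤ)) (c : ℤ × ℤ) (k : ℕ) (i : Fin 4) : Prop :=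
  ∃ u ∈ R, md u c = k ∧ inQuad i c u

lemma md_cast (u v : ℤ × ℤ) : (md u v : ℤ) = |u.1 - v.1| + |u.2 - v.2| := by
  simp [md, Int.natCast_natAbs]

lemma keyUR (u c v : ℤ × ℤ) (m k : ℕ) (h1 : c.1 ≤ u.1) (h2 : c.2 ≤ u.2)
    (hm : md u c = m) (hv : md u v ≤ k) : c.1 + c.2 + m ≤ v.1 + v.2 + k := by
  have e1 : (m : ℤ) = (u.1 - c.1) + (u.2 - c.2) := by
    rw [← hm, md_cast, abs_of_nonneg (by linarith), abs_of_nonneg (by linarith)]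
  have e2 := md_cast u v
  have h3 := le_abs_self (u.1 - v.1)
  have h4 := le_abs_self (u.2 - v.2)
  have h5 : (md u v : ℤ) ≤ k := by exact_mod_cast hv
  linarith

lemma keyUL (u c v : ℤ × ℤ) (m k : ℕ) (h1 : u.1 ≤ c.1) (h2 : c.2 ≤ u.2)
    (hm : md u c = m) (hv : md u v ≤ k) : c.2 - c.1 + m ≤ v.2 - v.1 + k := by
  have e1 : (m : ℤ) = (c.1 - u.1) + (u.2 - c.2) := by
    rw [← hm, md_cast, abs_of_nonpos (by linarith), abs_of_nonneg (by linarith)]; ring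
  have e2 := md_cast u v
  have h3 := neg_abs_le (u.1 - v.1)
  have h4 := le_abs_self (u.2 - v.2)
  have h5 : (md u v : ℤ) ≤ k := by exact_mod_cast hv
  linarith

lemma keyDL (u c v : ℤ × ℤ) (m k : ℕ) (h1 : u.1 ≤ c.1) (h2 : u.2 ≤ c.2)
    (hm : md u c = m) (hv : md u v ≤ k) : v.1 + v.2 + m ≤ c.1 + c.2 + k := by
  have e1 : (m : ℤ) = (c.1 - u.1) + (c.2 - u.2) := by
    rw [← hm, md_cast, abs_of_nonpos (by linarith), abs_of_nonpos (by linarith)]; ring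
  have e2 := md_cast u v
  have h3 := neg_abs_le (u.1 - v.1)
  have h4 := neg_abs_le (u.2 - v.2)
  have h5 : (md u v : ℤ) ≤ k := by exact_mod_cast hv
  linarith

lemma keyDR (u c v : ℤ × ℤ) (m k : ℕ) (h1 : c.1 ≤ u.1) (h2 : u.2 ≤ c.2)
    (hm : md u c = m) (hv : md u v ≤ k) : c.1 - c.2 + m ≤ v.1 - v.2 + k := by
  have e1 : (m : ℤ) = (u.1 - c.1) + (c.2 - u.2) := by
    rw [← hm, md_cast, abs_of_nonneg (by linarith), abs_of_nonpos (by linarith)]; ring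
  have e2 := md_cast u v
  have h3 := le_abs_self (u.1 - v.1)
  have h4 := neg_abs_le (u.2 - v.2)
  have h5 : (md u v : ℤ) ≤ k := by exact_mod_cast hv
  linarith

/-- If the radius-`k` diamond centered at `c` is a minimal enclosing
diamond for `R`, exactly three of its four boundaries contain robot positions,
and for the remaining (empty) boundary there is a robot at distance `k − 1` from
`c` in its closed quadrant, then `c` is the unique min-max node of `R`. -/
theorem stmt_8 (R : Finset (ℤ × ℤ)) (hR : R.Nonempty) (k : ℕ)
    (hk : IsLeast {n : ℕ | ∃ c : ℤ × ℤ, ∀ u ∈ R, md u c ≤ n} k)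
    (c : ℤ × ℤ) (hecc : ecc R c = k) (j : Fin 4)
    (hthree : ∀ i : Fin 4, i ≠ j → bdryOcc R c k i)
    (hempty : ¬ bdryOcc R c k j)
    (hnear : ∃ u ∈ R, md u c = k - 1 ∧ inQuad j c u) :
    {v : ℤ × ℤ | IsMinMax R v} = {c} := by
  obtain ⟨un, hunR, hund, hunq⟩ := hnear
  -- k ≥ 1
  have hk1 : 1 ≤ k := by
    by_contra h
    have hk0 : k = 0 := by omega
    apply hempty
    have : md un c = 0 := by omega
    have h1 : un.1 = c.1 ∧ un.2 = c.2 := by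
      unfold md at this; constructor <;> omega
    refine ⟨un, hunR, by omega, ?_⟩
    fin_cases j <;> simp [inQuad, h1.1, h1.2]
  have hminc : IsMinMax R c := by
    intro v'
    rw [hecc]
    exact hk.2 ⟨v', fun u hu => Finset.le_sup (f := fun u => md u v') hu⟩
  ext v
  simp only [Set.mem_setOf_eq, Set.mem_singleton_iff]
  constructor
  · intro hmv
    have hv : ∀ u ∈ R, md u v ≤ k := by
      intro u hu
      calc md u v ≤ ecc R v := Finset.le_sup (f := fun u => md u v) hu
        _ ≤ ecc R c := hmv c
        _ = k := hecc
    -- extract boundary robots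
    have hm1 : (↑(k - 1) : ℤ) = (k : ℤ) - 1 := by omega
    have hVC : v.1 = c.1 ∧ v.2 = c.2 := by
      fin_cases j
      · obtain ⟨u1, h1R, h1d, h1a, h1b⟩ := hthree 1 (by decide)
        obtain ⟨u2, h2R, h2d, h2a, h2b⟩ := hthree 2 (by decide)
        obtain ⟨u3, h3R, h3d, h3a, h3b⟩ := hthree 3 (by decide)
        obtain ⟨hna, hnb⟩ := hunq
        have A := keyUL u1 c v k k h1a h1b h1d (hv _ h1R)
        have B := keyDL u2 c v k k h2a h2b h2d (hv _ h2R)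
        have C := keyDR u3 c v k k h3a h3b h3d (hv _ h3R)
        have D := keyUR un c v (k-1) k hna hnb hund (hv _ hunR)
        constructor <;> omega
      · obtain ⟨u0, h0R, h0d, h0a, h0b⟩ := hthree 0 (by decide)
        obtain ⟨u2, h2R, h2d, h2a, h2b⟩ := hthree 2 (by decide)
        obtain ⟨u3, h3R, h3d, h3a, h3b⟩ := hthree 3 (by decide)
        obtain ⟨hna, hnb⟩ := hunq
        have A := keyUR u0 c v k k h0a h0b h0d (hv _ h0R)
        have B := keyDL u2 c v k k h2a h2b h2d (hv _ h2R)
        have C := keyDR u3 c v k k h3a h3b h3d (hv _ h3R)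
        have D := keyUL un c v (k-1) k hna hnb hund (hv _ hunR)
        constructor <;> omega
      · obtain ⟨u0, h0R, h0d, h0a, h0b⟩ := hthree 0 (by decide)
        obtain ⟨u1, h1R, h1d, h1a, h1b⟩ := hthree 1 (by decide)
        obtain ⟨u3, h3R, h3d, h3a, h3b⟩ := hthree 3 (by decide)
        obtain ⟨hna, hnb⟩ := hunq
        have A := keyUR u0 c v k k h0a h0b h0d (hv _ h0R)
        have B := keyUL u1 c v k k h1a h1b h1d (hv _ h1R)
        have C := keyDR u3 c v k k h3a h3b h3d (hv _ h3R)
        have D := keyDL un c v (k-1) k hna hnb hund (hv _ hunR)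
        constructor <;> omega
      · obtain ⟨u0, h0R, h0d, h0a, h0b⟩ := hthree 0 (by decide)
        obtain ⟨u1, h1R, h1d, h1a, h1b⟩ := hthree 1 (by decide)
        obtain ⟨u2, h2R, h2d, h2a, h2b⟩ := hthree 2 (by decide)
        obtain ⟨hna, hnb⟩ := hunq
        have A := keyUR u0 c v k k h0a h0b h0d (hv _ h0R)
        have B := keyUL u1 c v k k h1a h1b h1d (hv _ h1R)
        have C := keyDL u2 c v k k h2a h2b h2d (hv _ h2R)
        have D := keyDR un c v (k-1) k hna hnb hund (hv _ hunR)
        constructor <;> omega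
    exact Prod.ext hVC.1 hVC.2
  · rintro rfl; exact hminc
end

section
/- If there is a grid node c with ecc(c) = k (so the radius-k diamond centered at c is a minimal enclosing diamond for R) such that exactly two boundaries contain robot positions and these two are opposite boundaries, and for each of the two boundaries containing no robot position there exists a robot u ∈ R with d(u,c) = k − 1 lying in the closed quadrant of that boundary, then V_M(R) = {c}, i.e., c is the unique min-max node of R. -/
/-- Split a Manhattan-distance bound into four linear inequalities. -/
lemma md_split (u v : ℤ × ℤ) (k : ℕ) (h : md u v ≤ k) :
    u.1 - v.1 + (u.2 - v.2) ≤ (k : ℤ) ∧ v.1 - u.1 + (u.2 - v.2) ≤ (k : ℤ) ∧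
    u.1 - v.1 + (v.2 - u.2) ≤ (k : ℤ) ∧ v.1 - u.1 + (v.2 - u.2) ≤ (k : ℤ) := by
  simp only [md] at h; omega

/-- Key geometric lemma, case of occupied UR/DL boundaries. -/
lemma key1 (k : ℕ) (c v a b w z : ℤ × ℤ)
    (hak : md a c = k) (ha1 : c.1 ≤ a.1) (ha2 : c.2 ≤ a.2)
    (hbk : md b c = k) (hb1 : b.1 ≤ c.1) (hb2 : b.2 ≤ c.2)
    (hwk : md w c = k - 1) (hw1 : w.1 ≤ c.1) (hw2 : c.2 ≤ w.2)
    (hzk : md z c = k - 1) (hz1 : c.1 ≤ z.1) (hz2 : z.2 ≤ c.2)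
    (hav : md a v ≤ k) (hbv : md b v ≤ k) (hwv : md w v ≤ k) (hzv : md z v ≤ k) :
    v = c := by
  have ea : a.1 - c.1 + (a.2 - c.2) = (k : ℤ) := by simp only [md] at hak; omega
  have eb : c.1 - b.1 + (c.2 - b.2) = (k : ℤ) := by simp only [md] at hbk; omega
  have ew : c.1 - w.1 + (w.2 - c.2) = ((k - 1 : ℕ) : ℤ) := by simp only [md] at hwk; omega
  have ez : z.1 - c.1 + (c.2 - z.2) = ((k - 1 : ℕ) : ℤ) := by simp only [md] at hzk; omega
  obtain ⟨ia, -, -, -⟩ := md_split a v k hav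
  obtain ⟨-, -, -, ib⟩ := md_split b v k hbv
  obtain ⟨-, iw, -, -⟩ := md_split w v k hwv
  obtain ⟨-, -, iz, -⟩ := md_split z v k hzv
  have h1 : v.1 = c.1 := by omega
  have h2 : v.2 = c.2 := by omega
  exact Prod.ext h1 h2

/-- Key geometric lemma, case of occupied UL/DR boundaries. -/
lemma key2 (k : ℕ) (c v a b w z : ℤ × ℤ)
    (hak : md a c = k) (ha1 : a.1 ≤ c.1) (ha2 : c.2 ≤ a.2)
    (hbk : md b c = k) (hb1 : c.1 ≤ b.1) (hb2 : b.2 ≤ c.2)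
    (hwk : md w c = k - 1) (hw1 : c.1 ≤ w.1) (hw2 : c.2 ≤ w.2)
    (hzk : md z c = k - 1) (hz1 : z.1 ≤ c.1) (hz2 : z.2 ≤ c.2)
    (hav : md a v ≤ k) (hbv : md b v ≤ k) (hwv : md w v ≤ k) (hzv : md z v ≤ k) :
    v = c := by
  have ea : c.1 - a.1 + (a.2 - c.2) = (k : ℤ) := by simp only [md] at hak; omega
  have eb : b.1 - c.1 + (c.2 - b.2) = (k : ℤ) := by simp only [md] at hbk; omega
  have ew : w.1 - c.1 + (w.2 - c.2) = ((k - 1 : ℕ) : ℤ) := by simp only [md] at hwk; omega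
  have ez : c.1 - z.1 + (c.2 - z.2) = ((k - 1 : ℕ) : ℤ) := by simp only [md] at hzk; omega
  obtain ⟨-, ia, -, -⟩ := md_split a v k hav
  obtain ⟨-, -, ib, -⟩ := md_split b v k hbv
  obtain ⟨iw, -, -, -⟩ := md_split w v k hwv
  obtain ⟨-, -, -, iz⟩ := md_split z v k hzv
  have h1 : v.1 = c.1 := by omega
  have h2 : v.2 = c.2 := by omega
  exact Prod.ext h1 h2

/-- If the radius-`k` diamond centered at `c` is a minimal enclosing
diamond for `R`, exactly two of its boundaries contain robot positions and these
two are opposite, and for each of the two empty boundaries there is a robot at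
distance `k − 1` from `c` in its closed quadrant, then `c` is the unique min-max
node of `R`.  (Boundary indices: 0 = UR, 1 = UL, 2 = DL, 3 = DR; the opposite
pairs are (0,2) and (1,3).) -/
theorem stmt_9 (R : Finset (ℤ × ℤ)) (hR : R.Nonempty) (k : ℕ)
    (hk : IsLeast {n : ℕ | ∃ c : ℤ × ℤ, ∀ u ∈ R, md u c ≤ n} k)
    (c : ℤ × ℤ) (hecc : ecc R c = k)
    (hopp :
      (bdryOcc R c k 0 ∧ bdryOcc R c k 2 ∧ ¬ bdryOcc R c k 1 ∧ ¬ bdryOcc R c k 3 ∧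
        (∃ u ∈ R, md u c = k - 1 ∧ inQuad 1 c u) ∧
        (∃ u ∈ R, md u c = k - 1 ∧ inQuad 3 c u)) ∨
      (bdryOcc R c k 1 ∧ bdryOcc R c k 3 ∧ ¬ bdryOcc R c k 0 ∧ ¬ bdryOcc R c k 2 ∧
        (∃ u ∈ R, md u c = k - 1 ∧ inQuad 0 c u) ∧
        (∃ u ∈ R, md u c = k - 1 ∧ inQuad 2 c u))) :
    {v : ℤ × ℤ | IsMinMax R v} = {c} := by
  have hlow : ∀ v : ℤ × ℤ, k ≤ ecc R v := by
    intro v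
    exact hk.2 ⟨v, fun u hu => Finset.le_sup (f := fun u => md u v) hu⟩
  ext v
  simp only [Set.mem_setOf_eq, Set.mem_singleton_iff]
  constructor
  · intro hmm
    have hv : ecc R v ≤ k := hecc ▸ hmm c
    have hall : ∀ u ∈ R, md u v ≤ k :=
      fun u hu => le_trans (Finset.le_sup (f := fun u => md u v) hu) hv
    rcases hopp with ⟨⟨a, haR, hak, ha1, ha2⟩, ⟨b, hbR, hbk, hb1, hb2⟩, -, -,
        ⟨w, hwR, hwk, hw1, hw2⟩, ⟨z, hzR, hzk, hz1, hz2⟩⟩ |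
      ⟨⟨a, haR, hak, ha1, ha2⟩, ⟨b, hbR, hbk, hb1, hb2⟩, -, -,
        ⟨w, hwR, hwk, hw1, hw2⟩, ⟨z, hzR, hzk, hz1, hz2⟩⟩
    · exact key1 k c v a b w z hak ha1 ha2 hbk hb1 hb2 hwk hw1 hw2 hzk hz1 hz2
        (hall a haR) (hall b hbR) (hall w hwR) (hall z hzR)
    · exact key2 k c v a b w z hak ha1 ha2 hbk hb1 hb2 hwk hw1 hw2 hzk hz1 hz2
        (hall a haR) (hall b hbR) (hall w hwR) (hall z hzR)
  · rintro rfl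
    intro v'
    rw [hecc]
    exact hlow v'
end

section
/- Let v be a min-max node of R (so ecc(v) = k) that has exactly one neighbour v₁ which is a min-max node. Then exactly two boundaries of the radius-k diamond centered at v contain robot positions, these two boundaries are adjacent, and v₁ is the neighbour of v nearest to their common corner. Concretely, if v₁ = v + (0,1), then every u ∈ R with d(u,v) = k satisfies u₂ > v₂, and there exist such u whose first coordinate is at most the first coordinate of v, and such u whose first coordinate is at least the first coordinate of v (so B_UL(v) and B_UR(v) contain robot positions and B_DL(v), B_DR(v) contain none); the analogous statements hold for the other three possible positions of v₁. -/
/-- Let `v` be a min-max node of `R` (with `k` the minimal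
enclosing radius) having exactly one neighbour `v₁` that is a min-max node.
Then exactly two, adjacent, boundaries of the radius-`k` diamond centered at `v`
contain robot positions, namely the two nearest to `v₁`; concretely, for each of
the four possible positions of `v₁` the corresponding statement holds. -/
theorem stmt_10 (R : Finset (ℤ × ℤ)) (hR : R.Nonempty) (k : ℕ)
    (hk : IsLeast {n : ℕ | ∃ c : ℤ × ℤ, ∀ u ∈ R, md u c ≤ n} k)
    (v : ℤ × ℤ) (hv : IsMinMax R v)
    (v₁ : ℤ × ℤ) (hv₁ : IsMinMax R v₁) (hadj : md v₁ v = 1)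
    (huniq : ∀ u : ℤ × ℤ, md u v = 1 → IsMinMax R u → u = v₁) :
    (v₁ = (v.1, v.2 + 1) →
      (∀ u ∈ R, md u v = k → v.2 < u.2) ∧
      (∃ u ∈ R, md u v = k ∧ u.1 ≤ v.1) ∧ (∃ u ∈ R, md u v = k ∧ v.1 ≤ u.1)) ∧
    (v₁ = (v.1, v.2 - 1) →
      (∀ u ∈ R, md u v = k → u.2 < v.2) ∧
      (∃ u ∈ R, md u v = k ∧ u.1 ≤ v.1) ∧ (∃ u ∈ R, md u v = k ∧ v.1 ≤ u.1)) ∧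
    (v₁ = (v.1 + 1, v.2) →
      (∀ u ∈ R, md u v = k → v.1 < u.1) ∧
      (∃ u ∈ R, md u v = k ∧ u.2 ≤ v.2) ∧ (∃ u ∈ R, md u v = k ∧ v.2 ≤ u.2)) ∧
    (v₁ = (v.1 - 1, v.2) →
      (∀ u ∈ R, md u v = k → u.1 < v.1) ∧
      (∃ u ∈ R, md u v = k ∧ u.2 ≤ v.2) ∧ (∃ u ∈ R, md u v = k ∧ v.2 ≤ u.2)) := by
  have hkle : ∀ v' : ℤ × ℤ, k ≤ ecc R v' := fun v' =>
    hk.2 ⟨v', fun u hu => Finset.le_sup (f := fun u => md u v') hu⟩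
  obtain ⟨c, hc⟩ := hk.1
  have hle : ∀ u ∈ R, md u v ≤ k := fun u hu =>
    le_trans (Finset.le_sup (f := fun u => md u v) hu)
      (le_trans (hv c) (Finset.sup_le hc))
  have hle1 : ∀ u ∈ R, md u v₁ ≤ k := fun u hu =>
    le_trans (Finset.le_sup (f := fun u => md u v₁) hu)
      (le_trans (hv₁ c) (Finset.sup_le hc))
  have hmm : ∀ w : ℤ × ℤ, (∀ u ∈ R, md u w ≤ k) → IsMinMax R w :=
    fun w hw v' => le_trans (Finset.sup_le hw) (hkle v')
  refine ⟨?_, ?_, ?_, ?_⟩ <;> intro h1 <;> subst h1 <;> refine ⟨?_, ?_, ?_⟩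
  -- case v₁ = (v.1, v.2 + 1)
  · intro u hu hmd
    have h2 := hle1 u hu
    simp only [md] at h2 hmd
    omega
  · by_contra hcon
    push_neg at hcon
    have hw : ∀ u ∈ R, md u (v.1 + 1, v.2) ≤ k := by
      intro u hu
      have h2 := hle u hu
      by_cases h3 : md u v = k
      · have h4 := hcon u hu h3
        simp only [md] at h2 h3 ⊢
        omega
      · simp only [md] at h2 h3 ⊢
        omega
    have := huniq (v.1 + 1, v.2) (by simp [md]) (hmm _ hw)
    simp only [Prod.mk.injEq] at this
    omega
  · by_contra hcon
    push_neg at hcon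
    have hw : ∀ u ∈ R, md u (v.1 - 1, v.2) ≤ k := by
      intro u hu
      have h2 := hle u hu
      by_cases h3 : md u v = k
      · have h4 := hcon u hu h3
        simp only [md] at h2 h3 ⊢
        omega
      · simp only [md] at h2 h3 ⊢
        omega
    have := huniq (v.1 - 1, v.2) (by simp [md]) (hmm _ hw)
    simp only [Prod.mk.injEq] at this
    omega
  -- case v₁ = (v.1, v.2 - 1)
  · intro u hu hmd
    have h2 := hle1 u hu
    simp only [md] at h2 hmd
    omega
  · by_contra hcon
    push_neg at hcon
    have hw : ∀ u ∈ R, md u (v.1 + 1, v.2) ≤ k := by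
      intro u hu
      have h2 := hle u hu
      by_cases h3 : md u v = k
      · have h4 := hcon u hu h3
        simp only [md] at h2 h3 ⊢
        omega
      · simp only [md] at h2 h3 ⊢
        omega
    have := huniq (v.1 + 1, v.2) (by simp [md]) (hmm _ hw)
    simp only [Prod.mk.injEq] at this
    omega
  · by_contra hcon
    push_neg at hcon
    have hw : ∀ u ∈ R, md u (v.1 - 1, v.2) ≤ k := by
      intro u hu
      have h2 := hle u hu
      by_cases h3 : md u v = k
      · have h4 := hcon u hu h3
        simp only [md] at h2 h3 ⊢
        omega
      · simp only [md] at h2 h3 ⊢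
        omega
    have := huniq (v.1 - 1, v.2) (by simp [md]) (hmm _ hw)
    simp only [Prod.mk.injEq] at this
    omega
  -- case v₁ = (v.1 + 1, v.2)
  · intro u hu hmd
    have h2 := hle1 u hu
    simp only [md] at h2 hmd
    omega
  · by_contra hcon
    push_neg at hcon
    have hw : ∀ u ∈ R, md u (v.1, v.2 + 1) ≤ k := by
      intro u hu
      have h2 := hle u hu
      by_cases h3 : md u v = k
      · have h4 := hcon u hu h3
        simp only [md] at h2 h3 ⊢
        omega
      · simp only [md] at h2 h3 ⊢
        omega
    have := huniq (v.1, v.2 + 1) (by simp [md]) (hmm _ hw)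
    simp only [Prod.mk.injEq] at this
    omega
  · by_contra hcon
    push_neg at hcon
    have hw : ∀ u ∈ R, md u (v.1, v.2 - 1) ≤ k := by
      intro u hu
      have h2 := hle u hu
      by_cases h3 : md u v = k
      · have h4 := hcon u hu h3
        simp only [md] at h2 h3 ⊢
        omega
      · simp only [md] at h2 h3 ⊢
        omega
    have := huniq (v.1, v.2 - 1) (by simp [md]) (hmm _ hw)
    simp only [Prod.mk.injEq] at this
    omega
  -- case v₁ = (v.1 - 1, v.2)
  · intro u hu hmd
    have h2 := hle1 u hu
    simp only [md] at h2 hmd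
    omega
  · by_contra hcon
    push_neg at hcon
    have hw : ∀ u ∈ R, md u (v.1, v.2 + 1) ≤ k := by
      intro u hu
      have h2 := hle u hu
      by_cases h3 : md u v = k
      · have h4 := hcon u hu h3
        simp only [md] at h2 h3 ⊢
        omega
      · simp only [md] at h2 h3 ⊢
        omega
    have := huniq (v.1, v.2 + 1) (by simp [md]) (hmm _ hw)
    simp only [Prod.mk.injEq] at this
    omega
  · by_contra hcon
    push_neg at hcon
    have hw : ∀ u ∈ R, md u (v.1, v.2 - 1) ≤ k := by
      intro u hu
      have h2 := hle u hu
      by_cases h3 : md u v = k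
      · have h4 := hcon u hu h3
        simp only [md] at h2 h3 ⊢
        omega
      · simp only [md] at h2 h3 ⊢
        omega
    have := huniq (v.1, v.2 - 1) (by simp [md]) (hmm _ hw)
    simp only [Prod.mk.injEq] at this
    omega
end

section
/- Let v be a min-max node of R (so ecc(v) = k) that has exactly two neighbours v₁ and v₂ which are min-max nodes. Then exactly one boundary of the radius-k diamond centered at v contains robot positions, namely the boundary nearest to both v₁ and v₂. Concretely, if v₁ = v + (1,0) and v₂ = v + (0,1), then every u ∈ R with d(u,v) = k has first coordinate strictly greater than the first coordinate of v and second coordinate strictly greater than the second coordinate of v (strictly inside the upper-right quadrant), so only B_UR(v) contains robot positions; the analogous statements hold for the other three possible configurations of v₁, v₂. -/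
/-- Let `v` be a min-max node of `R` (with `k` the minimal
enclosing radius) having exactly two neighbours `v₁, v₂` that are min-max nodes.
Then `{v₁, v₂}` is one of the four corner configurations, and exactly one
boundary of the radius-`k` diamond centered at `v` contains robot positions,
namely the one nearest to both `v₁` and `v₂`: e.g. if `{v₁,v₂} = {v+(1,0), v+(0,1)}`
then every `u ∈ R` with `d(u,v) = k` lies strictly inside the upper-right
quadrant, and analogously for the other three configurations. -/
theorem stmt_11 (R : Finset (ℤ × ℤ)) (hR : R.Nonempty) (k : ℕ)
    (hk : IsLeast {n : ℕ | ∃ c : ℤ × ℤ, ∀ u ∈ R, md u c ≤ n} k)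
    (v : ℤ × ℤ) (hv : IsMinMax R v)
    (v₁ v₂ : ℤ × ℤ) (hv₁ : IsMinMax R v₁) (hv₂ : IsMinMax R v₂)
    (hadj₁ : md v₁ v = 1) (hadj₂ : md v₂ v = 1) (hne : v₁ ≠ v₂)
    (huniq : ∀ u : ℤ × ℤ, md u v = 1 → IsMinMax R u → u = v₁ ∨ u = v₂) :
    (({v₁, v₂} : Set (ℤ × ℤ)) = {(v.1 + 1, v.2), (v.1, v.2 + 1)} ∨
     ({v₁, v₂} : Set (ℤ × ℤ)) = {(v.1 - 1, v.2), (v.1, v.2 + 1)} ∨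
     ({v₁, v₂} : Set (ℤ × ℤ)) = {(v.1 - 1, v.2), (v.1, v.2 - 1)} ∨
     ({v₁, v₂} : Set (ℤ × ℤ)) = {(v.1 + 1, v.2), (v.1, v.2 - 1)}) ∧
    (({v₁, v₂} : Set (ℤ × ℤ)) = {(v.1 + 1, v.2), (v.1, v.2 + 1)} →
      ∀ u ∈ R, md u v = k → v.1 < u.1 ∧ v.2 < u.2) ∧
    (({v₁, v₂} : Set (ℤ × ℤ)) = {(v.1 - 1, v.2), (v.1, v.2 + 1)} →
      ∀ u ∈ R, md u v = k → u.1 < v.1 ∧ v.2 < u.2) ∧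
    (({v₁, v₂} : Set (ℤ × ℤ)) = {(v.1 - 1, v.2), (v.1, v.2 - 1)} →
      ∀ u ∈ R, md u v = k → u.1 < v.1 ∧ u.2 < v.2) ∧
    (({v₁, v₂} : Set (ℤ × ℤ)) = {(v.1 + 1, v.2), (v.1, v.2 - 1)} →
      ∀ u ∈ R, md u v = k → v.1 < u.1 ∧ u.2 < v.2) := by
  -- every min-max node has eccentricity exactly k
  have ecck : ∀ w, IsMinMax R w → ecc R w = k := by
    intro w hw
    obtain ⟨c, hc⟩ := hk.1
    have h1 : ecc R w ≤ ecc R c := hw c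
    have h2 : ecc R c ≤ k := Finset.sup_le hc
    have h3 : k ≤ ecc R w :=
      hk.2 ⟨w, fun u hu => Finset.le_sup (f := fun u => md u w) hu⟩
    omega
  -- bound on distance from robots to a min-max node
  have hub : ∀ w, IsMinMax R w → ∀ u ∈ R, md u w ≤ k := by
    intro w hw u hu
    have h := Finset.le_sup (f := fun u => md u w) hu
    exact le_trans h (le_of_eq (ecck w hw))
  -- there exists an extreme robot
  have hex : ∃ u ∈ R, md u v = k := by
    obtain ⟨u, hu, h⟩ := Finset.exists_mem_eq_sup R hR (fun u => md u v)
    exact ⟨u, hu, by rw [← h]; exact ecck v hv⟩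
  -- direction lemmas
  have dR : IsMinMax R (v.1 + 1, v.2) → ∀ u ∈ R, md u v = k → v.1 < u.1 := by
    intro hw u hu hmd
    have h2 := hub _ hw u hu
    simp only [md] at hmd h2
    omega
  have dL : IsMinMax R (v.1 - 1, v.2) → ∀ u ∈ R, md u v = k → u.1 < v.1 := by
    intro hw u hu hmd
    have h2 := hub _ hw u hu
    simp only [md] at hmd h2
    omega
  have dU : IsMinMax R (v.1, v.2 + 1) → ∀ u ∈ R, md u v = k → v.2 < u.2 := by
    intro hw u hu hmd
    have h2 := hub _ hw u hu
    simp only [md] at hmd h2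
    omega
  have dD : IsMinMax R (v.1, v.2 - 1) → ∀ u ∈ R, md u v = k → u.2 < v.2 := by
    intro hw u hu hmd
    have h2 := hub _ hw u hu
    simp only [md] at hmd h2
    omega
  -- any member of {v₁, v₂} is min-max
  have mm : ∀ w : ℤ × ℤ, w ∈ ({v₁, v₂} : Set (ℤ × ℤ)) → IsMinMax R w := by
    rintro w (rfl | rfl) <;> assumption
  refine ⟨?_, ?_, ?_, ?_, ?_⟩
  · -- classification of the two neighbours
    have c1 : v₁ = (v.1 + 1, v.2) ∨ v₁ = (v.1 - 1, v.2) ∨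
        v₁ = (v.1, v.2 + 1) ∨ v₁ = (v.1, v.2 - 1) := by
      simp only [md] at hadj₁
      have : (v₁.1 = v.1 + 1 ∧ v₁.2 = v.2) ∨ (v₁.1 = v.1 - 1 ∧ v₁.2 = v.2) ∨
          (v₁.1 = v.1 ∧ v₁.2 = v.2 + 1) ∨ (v₁.1 = v.1 ∧ v₁.2 = v.2 - 1) := by omega
      rcases this with ⟨h, h'⟩ | ⟨h, h'⟩ | ⟨h, h'⟩ | ⟨h, h'⟩
      · exact Or.inl (Prod.ext h h')
      · exact Or.inr (Or.inl (Prod.ext h h'))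
      · exact Or.inr (Or.inr (Or.inl (Prod.ext h h')))
      · exact Or.inr (Or.inr (Or.inr (Prod.ext h h')))
    have c2 : v₂ = (v.1 + 1, v.2) ∨ v₂ = (v.1 - 1, v.2) ∨
        v₂ = (v.1, v.2 + 1) ∨ v₂ = (v.1, v.2 - 1) := by
      simp only [md] at hadj₂
      have : (v₂.1 = v.1 + 1 ∧ v₂.2 = v.2) ∨ (v₂.1 = v.1 - 1 ∧ v₂.2 = v.2) ∨
          (v₂.1 = v.1 ∧ v₂.2 = v.2 + 1) ∨ (v₂.1 = v.1 ∧ v₂.2 = v.2 - 1) := by omega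
      rcases this with ⟨h, h'⟩ | ⟨h, h'⟩ | ⟨h, h'⟩ | ⟨h, h'⟩
      · exact Or.inl (Prod.ext h h')
      · exact Or.inr (Or.inl (Prod.ext h h'))
      · exact Or.inr (Or.inr (Or.inl (Prod.ext h h')))
      · exact Or.inr (Or.inr (Or.inr (Prod.ext h h')))
    obtain ⟨u, hu, hmd⟩ := hex
    rcases c1 with rfl | rfl | rfl | rfl <;> rcases c2 with rfl | rfl | rfl | rfl
    · exact absurd rfl hne
    · have h1 := dR hv₁ u hu hmd; have h2 := dL hv₂ u hu hmd; omega
    · exact Or.inl rfl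
    · exact Or.inr (Or.inr (Or.inr rfl))
    · have h1 := dL hv₁ u hu hmd; have h2 := dR hv₂ u hu hmd; omega
    · exact absurd rfl hne
    · exact Or.inr (Or.inl rfl)
    · exact Or.inr (Or.inr (Or.inl rfl))
    · exact Or.inl (Set.pair_comm _ _)
    · exact Or.inr (Or.inl (Set.pair_comm _ _))
    · exact absurd rfl hne
    · have h1 := dU hv₁ u hu hmd; have h2 := dD hv₂ u hu hmd; omega
    · exact Or.inr (Or.inr (Or.inr (Set.pair_comm _ _)))
    · exact Or.inr (Or.inr (Or.inl (Set.pair_comm _ _)))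
    · have h1 := dD hv₁ u hu hmd; have h2 := dU hv₂ u hu hmd; omega
    · exact absurd rfl hne
  · intro heq u hu hmd
    have hA := mm (v.1 + 1, v.2) (by rw [heq]; exact Set.mem_insert _ _)
    have hB := mm (v.1, v.2 + 1) (by rw [heq]; exact Set.mem_insert_of_mem _ rfl)
    exact ⟨dR hA u hu hmd, dU hB u hu hmd⟩
  · intro heq u hu hmd
    have hA := mm (v.1 - 1, v.2) (by rw [heq]; exact Set.mem_insert _ _)
    have hB := mm (v.1, v.2 + 1) (by rw [heq]; exact Set.mem_insert_of_mem _ rfl)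
    exact ⟨dL hA u hu hmd, dU hB u hu hmd⟩
  · intro heq u hu hmd
    have hA := mm (v.1 - 1, v.2) (by rw [heq]; exact Set.mem_insert _ _)
    have hB := mm (v.1, v.2 - 1) (by rw [heq]; exact Set.mem_insert_of_mem _ rfl)
    exact ⟨dL hA u hu hmd, dD hB u hu hmd⟩
  · intro heq u hu hmd
    have hA := mm (v.1 + 1, v.2) (by rw [heq]; exact Set.mem_insert _ _)
    have hB := mm (v.1, v.2 - 1) (by rw [heq]; exact Set.mem_insert_of_mem _ rfl)
    exact ⟨dR hA u hu hmd, dD hB u hu hmd⟩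
end

section
/- Let v be a min-max node of R, suppose R has more than one min-max node (|V_M(R)| > 1), and suppose no neighbour of v is a min-max node. Then there exists v₀ ∈ D(v) (a diagonal of v) such that v₀ is a min-max node; moreover, no neighbour of v₀ is a min-max node. -/
lemma md_le_iff (u w : ℤ × ℤ) (n : ℕ) :
    md u w ≤ n ↔ ((u.1 + u.2) - (w.1 + w.2)).natAbs ≤ n ∧
      ((u.1 - u.2) - (w.1 - w.2)).natAbs ≤ n := by
  unfold md; omega

lemma md_one (u w : ℤ × ℤ) (h : md u w = 1) :
    ((u.1 + u.2) - (w.1 + w.2)).natAbs = 1 ∧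
      ((u.1 - u.2) - (w.1 - w.2)).natAbs = 1 := by
  unfold md at h; omega

/-- If `v` is a min-max node of `R`, `R` has more than one min-max
node, and no neighbour of `v` is a min-max node, then some diagonal `v₀` of `v`
is a min-max node, and moreover no neighbour of `v₀` is a min-max node. -/
theorem stmt_12 (R : Finset (ℤ × ℤ)) (hR : R.Nonempty)
    (v : ℤ × ℤ) (hv : IsMinMax R v)
    (hmulti : ∃ v' : ℤ × ℤ, IsMinMax R v' ∧ v' ≠ v)
    (hnbr : ∀ u : ℤ × ℤ, md u v = 1 → ¬ IsMinMax R u) :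
    ∃ v₀ : ℤ × ℤ, (v₀.1 - v.1).natAbs = 1 ∧ (v₀.2 - v.2).natAbs = 1 ∧
      IsMinMax R v₀ ∧ (∀ u : ℤ × ℤ, md u v₀ = 1 → ¬ IsMinMax R u) := by
  classical
  set p : ℤ := v.1 + v.2 with hp
  set q : ℤ := v.1 - v.2 with hq
  set e : ℤ := (ecc R v : ℤ) with he
  set MA : ℤ := R.sup' hR (fun u => u.1 + u.2) with hMA
  set mA : ℤ := R.inf' hR (fun u => u.1 + u.2) with hmA
  set MB : ℤ := R.sup' hR (fun u => u.1 - u.2) with hMB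
  set mB : ℤ := R.inf' hR (fun u => u.1 - u.2) with hmB
  have hecc : ∀ w : ℤ × ℤ, ecc R w ≤ ecc R v ↔
      (MA ≤ (w.1 + w.2) + e ∧ (w.1 + w.2) - e ≤ mA ∧
       MB ≤ (w.1 - w.2) + e ∧ (w.1 - w.2) - e ≤ mB) := by
    intro w
    rw [ecc, Finset.sup_le_iff]
    constructor
    · intro h
      refine ⟨Finset.sup'_le _ _ ?_, Finset.le_inf' _ _ ?_,
        Finset.sup'_le _ _ ?_, Finset.le_inf' _ _ ?_⟩ <;>
        · intro u hu
          have := (md_le_iff u w _).mp (h u hu)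
          omega
    · rintro ⟨h1, h2, h3, h4⟩ u hu
      have c1 := Finset.le_sup' (fun u : ℤ × ℤ => u.1 + u.2) hu
      have c2 := Finset.inf'_le (fun u : ℤ × ℤ => u.1 + u.2) hu
      have c3 := Finset.le_sup' (fun u : ℤ × ℤ => u.1 - u.2) hu
      have c4 := Finset.inf'_le (fun u : ℤ × ℤ => u.1 - u.2) hu
      rw [md_le_iff]
      simp only [← hMA, ← hmA, ← hMB, ← hmB] at *
      omega
  have hiff : ∀ w : ℤ × ℤ, IsMinMax R w ↔
      (MA ≤ (w.1 + w.2) + e ∧ (w.1 + w.2) - e ≤ mA ∧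
       MB ≤ (w.1 - w.2) + e ∧ (w.1 - w.2) - e ≤ mB) := by
    intro w
    refine Iff.trans ⟨fun h => h v, fun h v' => le_trans h (hv v')⟩ (hecc w)
  have hv0 : MA ≤ p + e ∧ p - e ≤ mA ∧ MB ≤ q + e ∧ q - e ≤ mB := (hiff v).mp hv
  obtain ⟨v', hv', hne⟩ := hmulti
  have hv'0 := (hiff v').mp hv'
  have hne' : v'.1 ≠ v.1 ∨ v'.2 ≠ v.2 := by
    by_contra h
    push_neg at h
    exact hne (Prod.ext h.1 h.2)
  by_cases hP : MA = p + e ∧ mA = p - e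
  · -- the A-interval is a single point {p}
    have hApar : v'.1 + v'.2 = p := by omega
    have hB2 : v'.1 - v'.2 ≤ q - 2 ∨ q + 2 ≤ v'.1 - v'.2 := by omega
    rcases hB2 with h2 | h2
    · refine ⟨(v.1 - 1, v.2 + 1), by simp, by simp, ?_, ?_⟩
      · rw [hiff]; constructor; · simp; omega
        constructor; · simp; omega
        constructor; · simp; omega
        · simp; omega
      · intro u hu hmmu
        have h1 := md_one u _ hu
        have := (hiff u).mp hmmu
        simp at h1
        omega
    · refine ⟨(v.1 + 1, v.2 - 1), by simp, by simp, ?_, ?_⟩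
      · rw [hiff]; constructor; · simp; omega
        constructor; · simp; omega
        constructor; · simp; omega
        · simp; omega
      · intro u hu hmmu
        have h1 := md_one u _ hu
        have := (hiff u).mp hmmu
        simp at h1
        omega
  · by_cases hQ : MB = q + e ∧ mB = q - e
    · -- the B-interval is a single point {q}
      have hBpar : v'.1 - v'.2 = q := by omega
      have hA2 : v'.1 + v'.2 ≤ p - 2 ∨ p + 2 ≤ v'.1 + v'.2 := by omega
      rcases hA2 with h2 | h2
      · refine ⟨(v.1 - 1, v.2 - 1), by simp, by simp, ?_, ?_⟩
        · rw [hiff]; constructor; · simp; omega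
          constructor; · simp; omega
          constructor; · simp; omega
          · simp; omega
        · intro u hu hmmu
          have h1 := md_one u _ hu
          have := (hiff u).mp hmmu
          simp at h1
          omega
      · refine ⟨(v.1 + 1, v.2 + 1), by simp, by simp, ?_, ?_⟩
        · rw [hiff]; constructor; · simp; omega
          constructor; · simp; omega
          constructor; · simp; omega
          · simp; omega
        · intro u hu hmmu
          have h1 := md_one u _ hu
          have := (hiff u).mp hmmu
          simp at h1
          omega
    · -- both intervals have at least two points: a neighbour of v is min-max
      exfalso
      rw [not_and_or] at hP hQ
      have hA : MA ≤ p - 1 + e ∨ p + 1 - e ≤ mA := by omega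
      have hB : MB ≤ q - 1 + e ∨ q + 1 - e ≤ mB := by omega
      rcases hA with hA | hA <;> rcases hB with hB | hB
      · refine hnbr (v.1 - 1, v.2) ?_ ?_
        · show ((v.1 - 1) - v.1).natAbs + (v.2 - v.2).natAbs = 1; omega
        · rw [hiff]; refine ⟨by simp; omega, by simp; omega, by simp; omega, by simp; omega⟩
      · refine hnbr (v.1, v.2 - 1) ?_ ?_
        · show (v.1 - v.1).natAbs + ((v.2 - 1) - v.2).natAbs = 1; omega
        · rw [hiff]; refine ⟨by simp; omega, by simp; omega, by simp; omega, by simp; omega⟩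
      · refine hnbr (v.1, v.2 + 1) ?_ ?_
        · show (v.1 - v.1).natAbs + ((v.2 + 1) - v.2).natAbs = 1; omega
        · rw [hiff]; refine ⟨by simp; omega, by simp; omega, by simp; omega, by simp; omega⟩
      · refine hnbr (v.1 + 1, v.2) ?_ ?_
        · show ((v.1 + 1) - v.1).natAbs + (v.2 - v.2).natAbs = 1; omega
        · rw [hiff]; refine ⟨by simp; omega, by simp; omega, by simp; omega, by simp; omega⟩
end

section
/- If the graph G_M(R) contains a cycle, then the connected component of G_M(R) containing that cycle is a cycle of length four; equivalently, the vertex set of that component is {c, c+(1,0), c+(0,1), c+(1,1)} for some grid node c. -/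
/-- The subgraph `G_M(R)` of the infinite grid graph induced by the set of
min-max nodes of `R`: two min-max nodes are adjacent iff their Manhattan
distance is 1. -/
def GM (R : Finset (ℤ × ℤ)) : SimpleGraph {v : ℤ × ℤ // IsMinMax R v} where
  Adj u v := md u.val v.val = 1
  symm := by
    constructor
    intro u v h
    simp only [md] at h ⊢
    omega
  loopless := by
    constructor
    intro u h
    simp [md] at h

open SimpleGraph

lemma hasse_int_adj {a b : ℤ} : (hasse ℤ).Adj a b ↔ a + 1 = b ∨ b + 1 = a := by
  simp only [hasse_adj, Order.covBy_iff_add_one_eq]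

/-- Any walk from `a` to `a + 1` has to cross the cut between `{x ≤ a}` and `{x > a}`. -/
lemma hasse_int_mem_edges (a : ℤ) (p : (hasse ℤ).Walk a (a + 1)) : s(a, a + 1) ∈ p.edges := by
  obtain ⟨d, hd, hfst, hsnd⟩ := p.exists_boundary_dart {x | x ≤ a} (le_refl a) (by simp)
  have hstep := hasse_int_adj.1 d.adj
  simp only [Set.mem_ofPred_eq, not_le] at hfst hsnd
  have hd_eq : d.toProd = (a, a + 1) := Prod.ext (by omega) (by omega)
  have hedge : d.edge = s(a, a + 1) := by rw [Dart.edge, hd_eq]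
  exact hedge ▸ p.edges_eq_map_darts ▸ List.mem_map_of_mem hd

lemma hasse_int_isAcyclic : (hasse ℤ).IsAcyclic := by
  refine isAcyclic_iff_forall_adj_isBridge.2 fun v w hvw => isBridge_iff_forall_walk_mem_edges.2 ?_
  rcases hasse_int_adj.1 hvw with rfl | rfl
  · exact hasse_int_mem_edges v
  · intro p
    simpa [Sym2.eq_swap] using hasse_int_mem_edges w p.reverse

lemma isAcyclic_of_injective_int {V : Type*} {G : SimpleGraph V} (f : V → ℤ)
    (hf : Function.Injective f) (hadj : ∀ u v, G.Adj u v → f u + 1 = f v ∨ f v + 1 = f u) :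
    G.IsAcyclic :=
  hasse_int_isAcyclic.comap ⟨f, fun h => hasse_int_adj.2 (hadj _ _ h)⟩ hf

/-- In the rotated coordinates `x + y`, `x - y` the Manhattan distance is the sup distance, so
Manhattan balls, and intersections of them, are such rectangles. -/
def diagRect (A B C D : ℤ) : Set (ℤ × ℤ) :=
  {v | A ≤ v.1 + v.2 ∧ v.1 + v.2 ≤ B ∧ C ≤ v.1 - v.2 ∧ v.1 - v.2 ≤ D}

def unitSquare (c : ℤ × ℤ) : Set (ℤ × ℤ) :=
  {c, (c.1 + 1, c.2), (c.1, c.2 + 1), (c.1 + 1, c.2 + 1)}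

/-- Lattice points have `x + y ≡ x - y [ZMOD 2]`, so an empty interior forces both widths to be
exactly two and fixes the parity of the corners. -/
lemma diagRect_eq_unitSquare {A B C D : ℤ} (hAB : A + 1 < B) (hCD : C + 1 < D)
    (hempty : diagRect (A + 1) (B - 1) (C + 1) (D - 1) = ∅) :
    ∃ c, diagRect A B C D = unitSquare c := by
  have hfree : ∀ s t : ℤ, (s + t) % 2 = 0 → A < s → s < B → C < t → t < D → False := by
    intro s t hst hAs hsB hCt htD
    have hv : ((s + t) / 2, s - (s + t) / 2) ∈ diagRect (A + 1) (B - 1) (C + 1) (D - 1) := by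
      simp only [diagRect, Set.mem_ofPred_eq]
      omega
    simp [hempty] at hv
  have hodd : (A + C) % 2 = 1 := by
    by_contra h
    exact hfree (A + 1) (C + 1) (by omega) (by omega) (by omega) (by omega) (by omega)
  have hB : B = A + 2 := by
    by_contra h
    exact hfree (A + 2) (C + 1) (by omega) (by omega) (by omega) (by omega) (by omega)
  have hD : D = C + 2 := by
    by_contra h
    exact hfree (A + 1) (C + 2) (by omega) (by omega) (by omega) (by omega) (by omega)
  refine ⟨((A + C + 1) / 2, A - (A + C + 1) / 2), Set.ext fun v => ?_⟩
  simp only [diagRect, unitSquare, Set.mem_ofPred_eq, Set.mem_insert_iff, Set.mem_singleton_iff,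
    Prod.ext_iff]
  omega

lemma isMinMax_iff_ecc_le {R : Finset (ℤ × ℤ)} {v₀ v : ℤ × ℤ} (h₀ : IsMinMax R v₀) :
    IsMinMax R v ↔ ecc R v ≤ ecc R v₀ :=
  ⟨fun hv => hv v₀, fun hv v' => hv.trans (h₀ v')⟩

structure IsDiagBounds (R : Finset (ℤ × ℤ)) (a b c d : ℤ) : Prop where
  sum_max : IsGreatest ((fun u : ℤ × ℤ => u.1 + u.2) '' R) a
  sum_min : IsLeast ((fun u : ℤ × ℤ => u.1 + u.2) '' R) b
  diff_max : IsGreatest ((fun u : ℤ × ℤ => u.1 - u.2) '' R) c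
  diff_min : IsLeast ((fun u : ℤ × ℤ => u.1 - u.2) '' R) d

lemma exists_isDiagBounds {R : Finset (ℤ × ℤ)} (hR : R.Nonempty) :
    ∃ a b c d, IsDiagBounds R a b c d := by
  classical
  have hs := hR.image fun u : ℤ × ℤ => u.1 + u.2
  have ht := hR.image fun u : ℤ × ℤ => u.1 - u.2
  refine ⟨(R.image _).max' hs, (R.image _).min' hs, (R.image _).max' ht,
    (R.image _).min' ht, ?_, ?_, ?_, ?_⟩ <;> rw [← Finset.coe_image]
  exacts [Finset.isGreatest_max' _ hs, Finset.isLeast_min' _ hs, Finset.isGreatest_max' _ ht,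
    Finset.isLeast_min' _ ht]

namespace IsDiagBounds

variable {R : Finset (ℤ × ℤ)} {a b c d : ℤ}

lemma ecc_le_iff (h : IsDiagBounds R a b c d) {v : ℤ × ℤ} {r : ℕ} :
    ecc R v ≤ r ↔ v ∈ diagRect (a - r) (b + r) (c - r) (d + r) := by
  rw [ecc, Finset.sup_le_iff]
  simp only [diagRect, Set.mem_ofPred_eq, md]
  constructor
  · intro hr
    obtain ⟨ua, hua, rfl⟩ := h.sum_max.1
    obtain ⟨ub, hub, rfl⟩ := h.sum_min.1
    obtain ⟨uc, huc, rfl⟩ := h.diff_max.1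
    obtain ⟨ud, hud, rfl⟩ := h.diff_min.1
    have := hr ua hua
    have := hr ub hub
    have := hr uc huc
    have := hr ud hud
    beta_reduce
    omega
  · intro hv u hu
    have := h.sum_max.2 ⟨u, hu, rfl⟩
    have := h.sum_min.2 ⟨u, hu, rfl⟩
    have := h.diff_max.2 ⟨u, hu, rfl⟩
    have := h.diff_min.2 ⟨u, hu, rfl⟩
    beta_reduce at *
    omega

lemma isMinMax_iff (h : IsDiagBounds R a b c d) {v₀ v : ℤ × ℤ} (h₀ : IsMinMax R v₀) :
    IsMinMax R v ↔
      v ∈ diagRect (a - ecc R v₀) (b + ecc R v₀) (c - ecc R v₀) (d + ecc R v₀) :=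
  (isMinMax_iff_ecc_le h₀).trans h.ecc_le_iff

/-- A lattice point strictly inside the min-max rectangle would have smaller eccentricity. -/
lemma interior_eq_empty (h : IsDiagBounds R a b c d) {v₀ : ℤ × ℤ} (h₀ : IsMinMax R v₀) :
    diagRect (a - ecc R v₀ + 1) (b + ecc R v₀ - 1) (c - ecc R v₀ + 1) (d + ecc R v₀ - 1) = ∅ := by
  refine Set.eq_empty_of_forall_notMem fun v hv => ?_
  have hba : b ≤ a := h.sum_max.2 h.sum_min.1
  obtain ⟨k, hk⟩ : ∃ k, ecc R v₀ = k + 1 := Nat.exists_eq_succ_of_ne_zero (by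
    simp only [diagRect, Set.mem_ofPred_eq] at hv
    omega)
  have hv' : ecc R v ≤ k := h.ecc_le_iff.2 (by
    simp only [diagRect, Set.mem_ofPred_eq, hk, Nat.cast_add, Nat.cast_one] at hv ⊢
    omega)
  have := h₀ v
  omega

end IsDiagBounds

lemma GM_isAcyclic_of_sum_strip {R : Finset (ℤ × ℤ)} {A B C D : ℤ} (hAB : B ≤ A + 1)
    (hR : {v | IsMinMax R v} ⊆ diagRect A B C D) : (GM R).IsAcyclic := by
  refine isAcyclic_of_injective_int (fun v => v.1.1 - v.1.2) (fun u w huw => ?_) fun u w huw => ?_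
  all_goals
    have hu := hR u.2
    have hw := hR w.2
    simp only [diagRect, Set.mem_ofPred_eq] at hu hw
  · have : u.1.1 - u.1.2 = w.1.1 - w.1.2 := huw
    exact Subtype.ext (Prod.ext (by omega) (by omega))
  · have : md u.1 w.1 = 1 := huw
    simp only [md] at this
    omega

lemma GM_isAcyclic_of_diff_strip {R : Finset (ℤ × ℤ)} {A B C D : ℤ} (hCD : D ≤ C + 1)
    (hR : {v | IsMinMax R v} ⊆ diagRect A B C D) : (GM R).IsAcyclic := by
  refine isAcyclic_of_injective_int (fun v => v.1.1 + v.1.2) (fun u w huw => ?_) fun u w huw => ?_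
  all_goals
    have hu := hR u.2
    have hw := hR w.2
    simp only [diagRect, Set.mem_ofPred_eq] at hu hw
  · have : u.1.1 + u.1.2 = w.1.1 + w.1.2 := huw
    exact Subtype.ext (Prod.ext (by omega) (by omega))
  · have : md u.1 w.1 = 1 := huw
    simp only [md] at this
    omega

lemma GM_reachable_of_mem_unitSquare {R : Finset (ℤ × ℤ)} {c : ℤ × ℤ}
    (hsq : unitSquare c ⊆ {v | IsMinMax R v}) {u w : {v : ℤ × ℤ // IsMinMax R v}}
    (hu : u.1 ∈ unitSquare c) (hw : w.1 ∈ unitSquare c) : (GM R).Reachable u w := by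
  have hadj : ∀ {v v'} {hv : IsMinMax R v} {hv' : IsMinMax R v'}, md v v' = 1 →
      (GM R).Reachable ⟨v, hv⟩ ⟨v', hv'⟩ := fun h => Adj.reachable h
  suffices hc : ∀ v : {v : ℤ × ℤ // IsMinMax R v}, v.1 ∈ unitSquare c →
      (GM R).Reachable ⟨c, hsq (by simp [unitSquare])⟩ v from
    (hc u hu).symm.trans (hc w hw)
  rintro ⟨v, hv⟩ hmem
  rcases hmem with rfl | rfl | rfl | rfl
  · rfl
  · exact hadj (by simp [md])
  · exact hadj (by simp [md])
  · exact (hadj (v' := (c.1 + 1, c.2)) (hv' := hsq (by simp [unitSquare])) (by simp [md])).trans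
      (hadj (by simp [md]))

/-- If `G_M(R)` contains a cycle, then the connected component of
`G_M(R)` containing that cycle is a cycle of length four: its vertex set is
`{c, c+(1,0), c+(0,1), c+(1,1)}` for some grid node `c`. -/
theorem stmt_13 (R : Finset (ℤ × ℤ)) (hR : R.Nonempty)
    (v₀ : {v : ℤ × ℤ // IsMinMax R v})
    (p : (GM R).Walk v₀ v₀) (hp : p.IsCycle) :
    ∃ c : ℤ × ℤ, ∀ w : {v : ℤ × ℤ // IsMinMax R v},
      (GM R).Reachable v₀ w ↔
        w.val ∈ ({c, (c.1 + 1, c.2), (c.1, c.2 + 1), (c.1 + 1, c.2 + 1)} :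
          Set (ℤ × ℤ)) := by
  obtain ⟨a, b, c, d, hbounds⟩ := exists_isDiagBounds hR
  set m : ℤ := (ecc R v₀.1 : ℤ)
  have hminmax : ∀ v, IsMinMax R v ↔ v ∈ diagRect (a - m) (b + m) (c - m) (d + m) :=
    fun v => hbounds.isMinMax_iff v₀.2
  have hcyclic : ¬(GM R).IsAcyclic := fun h => h p hp
  have hsum : a - m + 1 < b + m := lt_of_not_ge fun h =>
    hcyclic (GM_isAcyclic_of_sum_strip h fun v => (hminmax v).1)
  have hdiff : c - m + 1 < d + m := lt_of_not_ge fun h =>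
    hcyclic (GM_isAcyclic_of_diff_strip h fun v => (hminmax v).1)
  obtain ⟨c₀, hsq⟩ := diagRect_eq_unitSquare hsum hdiff (hbounds.interior_eq_empty v₀.2)
  simp only [hsq] at hminmax
  refine ⟨c₀, fun w => ⟨fun _ => (hminmax w).1 w.2, fun hw => ?_⟩⟩
  exact GM_reachable_of_mem_unitSquare (fun v hv => (hminmax v).2 hv) ((hminmax v₀).1 v₀.2) hw
end

section
/- If the graph G_M(R) is disconnected, then V_M(R) is a disconnected step-graph; that is: |V_M(R)| > 1, no two distinct min-max nodes share a first coordinate or a second coordinate, and every min-max node v has at least one and at most two min-max nodes among its diagonals D(v). -/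
/-- `u` is a diagonal of `v`. -/
def Diag (v u : ℤ × ℤ) : Prop :=
  (u.1 - v.1).natAbs = 1 ∧ (u.2 - v.2).natAbs = 1

/-- A set `S` of grid nodes is a disconnected step-graph: it has more than one
node, no two distinct nodes of `S` share a first or second coordinate, and every
node of `S` has at least one and at most two nodes of `S` among its diagonals. -/
def DisconnectedStepGraph (S : Set (ℤ × ℤ)) : Prop :=
  (∃ a ∈ S, ∃ b ∈ S, a ≠ b) ∧
  (∀ a ∈ S, ∀ b ∈ S, a ≠ b → a.1 ≠ b.1 ∧ a.2 ≠ b.2) ∧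
  (∀ a ∈ S, ∃ b ∈ S, Diag a b) ∧
  (∀ a ∈ S, ∀ b ∈ S, ∀ c ∈ S, ∀ d ∈ S,
    Diag a b → Diag a c → Diag a d → (b = c ∨ b = d ∨ c = d))

/-!
In the rotated coordinates `(x + y, x - y)` the Manhattan distance becomes the Chebyshev
distance, so a Manhattan ball is a box in these coordinates, and so is any finite
intersection of balls. The min-max nodes are the nodes within distance `min ecc` of every
robot, hence the lattice nodes of a rotated box. If both sides of the box are
non-degenerate, every node can take a grid step that brings it closer, in the Chebyshev
sense, to any other node, so `G_M(R)` is connected. Otherwise the box is a segment of a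
diagonal line: a single node, or a disconnected step-graph.
-/

def rotBox (lA uA lB uB : ℤ) : Set (ℤ × ℤ) :=
  {v | v.1 + v.2 ∈ Set.Icc lA uA ∧ v.1 - v.2 ∈ Set.Icc lB uB}

def diagSegment (s c lo hi : ℤ) : Set (ℤ × ℤ) :=
  {v | v.1 ∈ Set.Icc lo hi ∧ v.2 = c + s * v.1}

lemma md_le_iff_mem_rotBox (u v : ℤ × ℤ) (r : ℕ) :
    md u v ≤ r ↔
      v ∈ rotBox (u.1 + u.2 - r) (u.1 + u.2 + r) (u.1 - u.2 - r) (u.1 - u.2 + r) := by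
  simp only [md, rotBox, Set.mem_ofPred_eq, Set.mem_Icc]
  omega

lemma rotBox_inter_rotBox (lA uA lB uB lA' uA' lB' uB' : ℤ) :
    rotBox lA uA lB uB ∩ rotBox lA' uA' lB' uB' =
      rotBox (max lA lA') (min uA uA') (max lB lB') (min uB uB') := by
  ext v
  simp only [rotBox, Set.mem_inter_iff, Set.mem_ofPred_eq, Set.mem_Icc]
  omega

lemma exists_rotBox_eq_setOf_ecc_le {R : Finset (ℤ × ℤ)} (hR : R.Nonempty) (r : ℕ) :
    ∃ lA uA lB uB, {v | ecc R v ≤ r} = rotBox lA uA lB uB := by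
  induction hR using Finset.Nonempty.cons_induction with
  | singleton u =>
    exact ⟨_, _, _, _, Set.ext fun v => by simpa [ecc] using md_le_iff_mem_rotBox u v r⟩
  | cons u R hu hR ih =>
    obtain ⟨lA, uA, lB, uB, hbox⟩ := ih
    refine ⟨_, _, _, _, Eq.trans ?_ (rotBox_inter_rotBox
      (u.1 + u.2 - r) (u.1 + u.2 + r) (u.1 - u.2 - r) (u.1 - u.2 + r) lA uA lB uB)⟩
    ext v
    rw [Set.mem_inter_iff, ← md_le_iff_mem_rotBox, ← hbox]
    simp [ecc]

lemma isMinMax_argmin_ecc (R : Finset (ℤ × ℤ)) : IsMinMax R (Function.argmin (ecc R)) :=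
  fun v => Function.argmin_le (ecc R) v

lemma exists_rotBox_eq_setOf_isMinMax {R : Finset (ℤ × ℤ)} (hR : R.Nonempty) :
    ∃ lA uA lB uB, {v | IsMinMax R v} = rotBox lA uA lB uB := by
  set v₀ := Function.argmin (ecc R)
  obtain ⟨lA, uA, lB, uB, hbox⟩ := exists_rotBox_eq_setOf_ecc_le hR (ecc R v₀)
  refine ⟨lA, uA, lB, uB, Eq.trans (Set.ext fun v => ?_) hbox⟩
  exact ⟨fun hv => hv v₀, fun hv v' => hv.trans (isMinMax_argmin_ecc R v')⟩

lemma exists_step_toward {l u x y : ℤ} (hlu : l < u) (hx : x ∈ Set.Icc l u)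
    (hy : y ∈ Set.Icc l u) :
    ∃ d : ℤ, (d = 1 ∨ d = -1) ∧ x + d ∈ Set.Icc l u ∧
      (x ≠ y → (x + d - y).natAbs < (x - y).natAbs) := by
  simp only [Set.mem_Icc] at *
  rcases lt_trichotomy x y with h | rfl | h
  · exact ⟨1, by omega⟩
  · by_cases hxu : x < u
    · exact ⟨1, by omega⟩
    · exact ⟨-1, by omega⟩
  · exact ⟨-1, by omega⟩

lemma GM_preconnected_of_eq_rotBox {R : Finset (ℤ × ℤ)} {lA uA lB uB : ℤ}
    (hbox : {v | IsMinMax R v} = rotBox lA uA lB uB) (hA : lA < uA) (hB : lB < uB) :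
    (GM R).Preconnected := by
  have mem (v : ℤ × ℤ) : IsMinMax R v ↔ v ∈ rotBox lA uA lB uB := Set.ext_iff.mp hbox v
  suffices ∀ n : ℕ, ∀ p q : {v // IsMinMax R v},
      (p.1.1 + p.1.2 - (q.1.1 + q.1.2)).natAbs ≤ n →
      (p.1.1 - p.1.2 - (q.1.1 - q.1.2)).natAbs ≤ n → (GM R).Reachable p q from
    fun p q => this _ p q le_sup_left le_sup_right
  intro n
  induction n with
  | zero =>
    intro p q ha hb
    rw [Subtype.ext (Prod.ext (by omega) (by omega) : p.1 = q.1)]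
  | succ n ih =>
    intro p q ha hb
    rcases eq_or_ne p q with rfl | hpq
    · rfl
    have hne : p.1.1 ≠ q.1.1 ∨ p.1.2 ≠ q.1.2 := by
      contrapose! hpq
      exact Subtype.ext (Prod.ext hpq.1 hpq.2)
    obtain ⟨hpA, hpB⟩ := (mem p.1).mp p.2
    obtain ⟨hqA, hqB⟩ := (mem q.1).mp q.2
    obtain ⟨dA, hdA, hwA, hcloserA⟩ := exists_step_toward hA hpA hqA
    obtain ⟨dB, hdB, hwB, hcloserB⟩ := exists_step_toward hB hpB hqB
    -- the grid neighbour of `p` with rotated coordinates `(p.1 + p.2 + dA, p.1 - p.2 + dB)`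
    let w : ℤ × ℤ := (p.1.1 + (dA + dB) / 2, p.1.2 + (dA - dB) / 2)
    have hw : IsMinMax R w := by
      rw [mem]
      simp only [rotBox, Set.mem_ofPred_eq, Set.mem_Icc, w] at hwA hwB ⊢
      omega
    have hpw : (GM R).Adj p ⟨w, hw⟩ := by
      change md p.1 w = 1
      simp only [md, w]
      omega
    refine hpw.reachable.trans (ih ⟨w, hw⟩ q ?_ ?_) <;>
    · simp only [w]
      omega

lemma rotBox_degenerate_sum (A lB uB : ℤ) :
    rotBox A A lB uB = diagSegment (-1) A ((A + lB + 1) / 2) ((A + uB) / 2) := by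
  ext v
  simp only [rotBox, diagSegment, Set.mem_ofPred_eq, Set.mem_Icc]
  omega

lemma rotBox_degenerate_diff (lA uA B : ℤ) :
    rotBox lA uA B B = diagSegment 1 (-B) ((lA + B + 1) / 2) ((uA + B) / 2) := by
  ext v
  simp only [rotBox, diagSegment, Set.mem_ofPred_eq, Set.mem_Icc]
  omega

lemma diagSegment_subsingleton (s c : ℤ) {lo hi : ℤ} (h : hi ≤ lo) :
    (diagSegment s c lo hi).Subsingleton := by
  rintro v ⟨⟨hv₁, hv₁'⟩, hv₂⟩ w ⟨⟨hw₁, hw₁'⟩, hw₂⟩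
  have h₁ : v.1 = w.1 := by omega
  exact Prod.ext h₁ (by rw [hv₂, hw₂, h₁])

lemma disconnectedStepGraph_diagSegment {s : ℤ} (hs : s = 1 ∨ s = -1) (c : ℤ) {lo hi : ℤ}
    (h : lo < hi) : DisconnectedStepGraph (diagSegment s c lo hi) := by
  simp only [DisconnectedStepGraph, diagSegment, Diag, Set.mem_ofPred_eq, Set.mem_Icc, ne_eq,
    Prod.ext_iff]
  refine ⟨⟨(lo, c + s * lo), ⟨⟨le_rfl, h.le⟩, rfl⟩, (hi, c + s * hi), ⟨⟨h.le, le_rfl⟩, rfl⟩,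
    fun h' => h.ne h'.1⟩, ?_, fun a ha => ?_, ?_⟩
  · rcases hs with rfl | rfl <;> omega
  · by_cases hup : a.1 < hi
    · exact ⟨(a.1 + 1, c + s * (a.1 + 1)), ⟨by omega, rfl⟩, by rcases hs with rfl | rfl <;> omega⟩
    · exact ⟨(a.1 - 1, c + s * (a.1 - 1)), ⟨by omega, rfl⟩, by rcases hs with rfl | rfl <;> omega⟩
  · rcases hs with rfl | rfl <;> omega

/-- If `G_M(R)` is disconnected, then `V_M(R)` is a disconnected
step-graph. -/
theorem stmt_15 (R : Finset (ℤ × ℤ)) (hR : R.Nonempty)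
    (hdis : ¬ (GM R).Connected) :
    DisconnectedStepGraph {v : ℤ × ℤ | IsMinMax R v} := by
  have hpre : ¬ (GM R).Preconnected := fun h =>
    hdis ((SimpleGraph.connected_iff _).mpr ⟨h, ⟨⟨_, isMinMax_argmin_ecc R⟩⟩⟩)
  obtain ⟨lA, uA, lB, uB, hbox⟩ := exists_rotBox_eq_setOf_isMinMax hR
  have hv₀ : Function.argmin (ecc R) ∈ rotBox lA uA lB uB := hbox ▸ isMinMax_argmin_ecc R
  obtain ⟨s, hs, c, lo, hi, hseg⟩ : ∃ s, (s = 1 ∨ s = -1) ∧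
      ∃ c lo hi, {v | IsMinMax R v} = diagSegment s c lo hi := by
    simp only [rotBox, Set.mem_ofPred_eq, Set.mem_Icc] at hv₀
    by_cases hA : lA < uA
    · by_cases hB : lB < uB
      · exact absurd (GM_preconnected_of_eq_rotBox hbox hA hB) hpre
      · obtain rfl : lB = uB := by omega
        exact ⟨1, Or.inl rfl, _, _, _, hbox.trans (rotBox_degenerate_diff lA uA lB)⟩
    · obtain rfl : lA = uA := by omega
      exact ⟨-1, Or.inr rfl, _, _, _, hbox.trans (rotBox_degenerate_sum lA lB uB)⟩
  rw [hseg]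
  refine disconnectedStepGraph_diagSegment hs c (lt_of_not_ge fun hle => hpre ?_)
  have : Subsingleton {v // IsMinMax R v} :=
    (hseg.symm ▸ diagSegment_subsingleton s c hle : {v | IsMinMax R v}.Subsingleton).coe_sort
  exact SimpleGraph.Preconnected.of_subsingleton
end

section
/- The set V_M(R) of min-max nodes is exactly one of the following: (i) a step-graph, i.e., it can be enumerated as v₁, …, v_p with d(v_i, v_{i+1}) = 1 for all 1 ≤ i < p and, for all 1 < i < p, the three consecutive nodes v_{i−1}, v_i, v_{i+1} occupy three corners of a unit square (equivalently v_{i+1} − v_i is perpendicular to v_i − v_{i−1}); (ii) a disconnected step-graph, i.e., |V_M(R)| > 1, no two distinct min-max nodes share a first or second coordinate, and every min-max node has at least one and at most two min-max nodes among its diagonals; or (iii) a cycle of length four, i.e., V_M(R) = {c, c+(1,0), c+(0,1), c+(1,1)} for some grid node c. -/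
/-- A set `S` of grid nodes is a step-graph: it can be enumerated as
`v₁, …, v_p` (`p ≥ 1`) with consecutive nodes at Manhattan distance 1 and, for
any three consecutive nodes, the two unit steps perpendicular (so the three
nodes occupy three corners of a unit square). -/
def StepGraph (S : Set (ℤ × ℤ)) : Prop :=
  ∃ (p : ℕ) (f : ℕ → ℤ × ℤ), 0 < p ∧
    (∀ i < p, ∀ j < p, f i = f j → i = j) ∧
    (S = {v | ∃ i < p, f i = v}) ∧
    (∀ i, i + 1 < p → md (f i) (f (i + 1)) = 1) ∧
    (∀ i, i + 2 < p →
      ((f (i + 1)).1 - (f i).1) * ((f (i + 2)).1 - (f (i + 1)).1) +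
        ((f (i + 1)).2 - (f i).2) * ((f (i + 2)).2 - (f (i + 1)).2) = 0)

/-- A set `S` of grid nodes is a cycle of length four. -/
def FourCycle (S : Set (ℤ × ℤ)) : Prop :=
  ∃ c : ℤ × ℤ, S = {c, (c.1 + 1, c.2), (c.1, c.2 + 1), (c.1 + 1, c.2 + 1)}

lemma md_le_iff_s16 (u v : ℤ × ℤ) (c : ℕ) :
    md u v ≤ c ↔ (u.1+u.2) - (v.1+v.2) ≤ c ∧ (v.1+v.2) - (u.1+u.2) ≤ c ∧
      (u.1-u.2) - (v.1-v.2) ≤ c ∧ (v.1-v.2) - (u.1-u.2) ≤ c := by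
  unfold md; omega

lemma ecc_le_iff (R : Finset (ℤ × ℤ)) (hR : R.Nonempty) (v : ℤ × ℤ) (c : ℕ) :
    ecc R v ≤ c ↔
      (R.sup' hR (fun u => u.1+u.2) ≤ (v.1+v.2) + c ∧
       (v.1+v.2) - c ≤ R.inf' hR (fun u => u.1+u.2) ∧
       R.sup' hR (fun u => u.1-u.2) ≤ (v.1-v.2) + c ∧
       (v.1-v.2) - c ≤ R.inf' hR (fun u => u.1-u.2)) := by
  unfold ecc
  rw [Finset.sup_le_iff]
  constructor
  · intro h
    refine ⟨Finset.sup'_le _ _ fun u hu => ?_, Finset.le_inf' _ _ fun u hu => ?_,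
      Finset.sup'_le _ _ fun u hu => ?_, Finset.le_inf' _ _ fun u hu => ?_⟩ <;>
      · have := (md_le_iff_s16 u v c).1 (h u hu); omega
  · rintro ⟨h1, h2, h3, h4⟩ u hu
    have e1 := Finset.le_sup' (fun u : ℤ×ℤ => u.1+u.2) hu
    have e2 := Finset.inf'_le (fun u : ℤ×ℤ => u.1+u.2) hu
    have e3 := Finset.le_sup' (fun u : ℤ×ℤ => u.1-u.2) hu
    have e4 := Finset.inf'_le (fun u : ℤ×ℤ => u.1-u.2) hu
    rw [md_le_iff_s16]; omega

lemma chain_case (S : Set (ℤ × ℤ)) (L1 L2 U2 : ℤ)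
    (hS : S = {v : ℤ × ℤ | L1 ≤ v.1+v.2 ∧ v.1+v.2 ≤ L1 ∧ L2 ≤ v.1-v.2 ∧ v.1-v.2 ≤ U2})
    (hne : ∃ v, v ∈ S) :
    StepGraph S ∨ DisconnectedStepGraph S := by
  obtain ⟨v0, hv0⟩ := hne
  rw [hS, Set.mem_setOf_eq] at hv0
  have hmem : ∀ v : ℤ × ℤ, v ∈ S ↔
      (L1 ≤ v.1+v.2 ∧ v.1+v.2 ≤ L1 ∧ L2 ≤ v.1-v.2 ∧ v.1-v.2 ≤ U2) := by
    intro v; rw [hS]; rfl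
  obtain ⟨qf, hqf⟩ : ∃ qf : ℤ, qf = L2 + (L1+L2) % 2 := ⟨_, rfl⟩
  by_cases hsmall : U2 < qf + 2
  · -- single point
    left
    refine ⟨1, fun _ => ((L1+qf)/2, (L1-qf)/2), one_pos, by omega, ?_, by omega, by omega⟩
    ext v
    rw [hmem]
    simp only [Set.mem_setOf_eq]
    constructor
    · intro h
      exact ⟨0, one_pos, Prod.ext_iff.mpr ⟨by omega, by omega⟩⟩
    · rintro ⟨i, hi, rfl⟩
      refine ⟨by omega, by omega, by omega, by omega⟩
  · -- diagonal chain, at least two points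
    right
    push_neg at hsmall
    refine ⟨?_, ?_, ?_, ?_⟩
    · refine ⟨((L1+qf)/2, (L1-qf)/2), ?_, ((L1+qf)/2 + 1, (L1-qf)/2 - 1), ?_, ?_⟩
      · rw [hmem]; refine ⟨by omega, by omega, by omega, by omega⟩
      · rw [hmem]; refine ⟨by omega, by omega, by omega, by omega⟩
      · intro h
        rw [Prod.ext_iff] at h
        omega
    · intro a ha b hb hab
      rw [hmem] at ha hb
      constructor <;> intro h <;> exact hab (Prod.ext_iff.mpr ⟨by omega, by omega⟩)
    · intro a ha
      rw [hmem] at ha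
      by_cases h : a.1 - a.2 + 2 ≤ U2
      · refine ⟨(a.1 + 1, a.2 - 1), ?_, ?_, ?_⟩
        · rw [hmem]; refine ⟨by omega, by omega, by omega, by omega⟩
        · show ((a.1+1) - a.1).natAbs = 1; omega
        · show ((a.2-1) - a.2).natAbs = 1; omega
      · refine ⟨(a.1 - 1, a.2 + 1), ?_, ?_, ?_⟩
        · rw [hmem]; refine ⟨by omega, by omega, by omega, by omega⟩
        · show ((a.1-1) - a.1).natAbs = 1; omega
        · show ((a.2+1) - a.2).natAbs = 1; omega
    · intro a ha b hb c hc d hd hab hac had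
      have huniq : ∀ w ∈ S, ∀ w' ∈ S, w.1 = w'.1 → w = w' := by
        intro w hw w' hw' h
        rw [hmem] at hw hw'
        exact Prod.ext_iff.mpr ⟨h, by omega⟩
      obtain ⟨hab1, _⟩ := hab
      obtain ⟨hac1, _⟩ := hac
      obtain ⟨had1, _⟩ := had
      have : b.1 = c.1 ∨ b.1 = d.1 ∨ c.1 = d.1 := by omega
      rcases this with h | h | h
      · exact Or.inl (huniq b hb c hc h)
      · exact Or.inr (Or.inl (huniq b hb d hd h))
      · exact Or.inr (Or.inr (huniq c hc d hd h))

set_option maxHeartbeats 1000000 in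
lemma stair_case (S : Set (ℤ × ℤ)) (L1 L2 U2 : ℤ) (hU2 : L2 ≤ U2)
    (hS : S = {v : ℤ × ℤ | L1 ≤ v.1+v.2 ∧ v.1+v.2 ≤ L1+1 ∧ L2 ≤ v.1-v.2 ∧ v.1-v.2 ≤ U2}) :
    StepGraph S := by
  obtain ⟨f, hf⟩ : ∃ f : ℕ → ℤ × ℤ, f = fun (k : ℕ) =>
      (((L1 + (L1+L2+(k:ℤ)) % 2) + (L2+(k:ℤ))) / 2,
       ((L1 + (L1+L2+(k:ℤ)) % 2) - (L2+(k:ℤ))) / 2) := ⟨_, rfl⟩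
  have hfk : ∀ k : ℕ, (f k).1 + (f k).2 = L1 + (L1+L2+(k:ℤ)) % 2 ∧
      (f k).1 - (f k).2 = L2 + (k:ℤ) := by
    intro k
    rw [hf]
    constructor <;> simp only [] <;> omega
  refine ⟨(U2 - L2).toNat + 1, f, Nat.succ_pos _, ?_, ?_, ?_, ?_⟩
  · intro i hi j hj h
    have h1 := (hfk i).2
    have h2 := (hfk j).2
    rw [h] at h1
    omega
  · ext v
    rw [hS]
    simp only [Set.mem_setOf_eq]
    constructor
    · intro hv
      refine ⟨(v.1 - v.2 - L2).toNat, by omega, ?_⟩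
      obtain ⟨h1, h2⟩ := hfk (v.1 - v.2 - L2).toNat
      exact Prod.ext_iff.mpr ⟨by omega, by omega⟩
    · rintro ⟨i, hi, rfl⟩
      obtain ⟨h1, h2⟩ := hfk i
      refine ⟨by omega, by omega, by omega, by omega⟩
  · intro i hi
    obtain ⟨h1, h2⟩ := hfk i
    obtain ⟨h3, h4⟩ := hfk (i+1)
    unfold md
    omega
  · intro i hi
    obtain ⟨h1, h2⟩ := hfk i
    obtain ⟨h3, h4⟩ := hfk (i+1)
    obtain ⟨h5, h6⟩ := hfk (i+2)
    have key : ((f (i+1)).1 - (f i).1 = 1 ∧ (f (i+1)).2 - (f i).2 = 0 ∧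
        (f (i+2)).1 - (f (i+1)).1 = 0 ∧ (f (i+2)).2 - (f (i+1)).2 = -1) ∨
        ((f (i+1)).1 - (f i).1 = 0 ∧ (f (i+1)).2 - (f i).2 = -1 ∧
        (f (i+2)).1 - (f (i+1)).1 = 1 ∧ (f (i+2)).2 - (f (i+1)).2 = 0) := by
      omega
    rcases key with ⟨e1, e2, e3, e4⟩ | ⟨e1, e2, e3, e4⟩ <;> rw [e1, e2, e3, e4] <;> ring

lemma four_case (S : Set (ℤ × ℤ)) (L1 U1 L2 U2 : ℤ)
    (hS : S = {v : ℤ × ℤ | L1 ≤ v.1+v.2 ∧ v.1+v.2 ≤ U1 ∧ L2 ≤ v.1-v.2 ∧ v.1-v.2 ≤ U2})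
    (h1 : L1 + 2 ≤ U1) (h2 : L2 + 2 ≤ U2)
    (hmin : ∀ x y : ℤ, ¬(L1+1 ≤ x+y ∧ x+y ≤ U1-1 ∧ L2+1 ≤ x-y ∧ x-y ≤ U2-1)) :
    FourCycle S := by
  have hodd : (L1 + L2) % 2 = 1 := by
    rcases Int.emod_two_eq (L1 + L2) with h | h
    · exact absurd (by refine ⟨by omega, by omega, by omega, by omega⟩)
        (hmin ((L1+L2)/2 + 1) ((L1-L2)/2))
    · exact h
  have hU1 : U1 = L1 + 2 := by
    by_contra h
    exact hmin ((L1+L2+3)/2) ((L1-L2+1)/2) (by refine ⟨by omega, by omega, by omega, by omega⟩)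
  have hU2 : U2 = L2 + 2 := by
    by_contra h
    exact hmin ((L1+L2+3)/2) ((L1-L2-1)/2) (by refine ⟨by omega, by omega, by omega, by omega⟩)
  refine ⟨((L1+L2+1)/2, (L1-L2-1)/2), ?_⟩
  rw [hS]
  ext v
  simp only [Set.mem_setOf_eq, Set.mem_insert_iff, Set.mem_singleton_iff, Prod.ext_iff]
  omega

def flip2 (v : ℤ × ℤ) : ℤ × ℤ := (v.1, -v.2)

lemma flip2_flip2 (v : ℤ × ℤ) : flip2 (flip2 v) = v := by simp [flip2]

lemma flip2_inj (v w : ℤ × ℤ) (h : flip2 v = flip2 w) : v = w := by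
  rw [← flip2_flip2 v, h, flip2_flip2]

lemma flip2_mem (S : Set (ℤ × ℤ)) (v : ℤ × ℤ) : v ∈ S ↔ flip2 v ∈ flip2 '' S := by
  constructor
  · exact fun h => Set.mem_image_of_mem _ h
  · rintro ⟨w, hw, hwv⟩
    rwa [flip2_inj _ _ hwv] at hw

lemma mem_flip_image (S : Set (ℤ × ℤ)) (v : ℤ × ℤ) : v ∈ flip2 '' S ↔ flip2 v ∈ S := by
  constructor
  · rintro ⟨w, hw, rfl⟩
    rwa [flip2_flip2]
  · intro h
    exact ⟨flip2 v, h, flip2_flip2 v⟩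

lemma md_flip (u v : ℤ × ℤ) : md (flip2 u) (flip2 v) = md u v := by
  simp only [md, flip2]
  omega

lemma diag_flip (u v : ℤ × ℤ) : Diag (flip2 u) (flip2 v) ↔ Diag u v := by
  simp only [Diag, flip2]
  omega

lemma stepGraph_flip (S : Set (ℤ × ℤ)) (h : StepGraph (flip2 '' S)) : StepGraph S := by
  obtain ⟨p, f, hp, hinj, hset, hmd, hperp⟩ := h
  refine ⟨p, fun k => flip2 (f k), hp, ?_, ?_, ?_, ?_⟩
  · intro i hi j hj hij
    exact hinj i hi j hj (flip2_inj _ _ hij)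
  · ext v
    rw [Set.mem_setOf_eq, flip2_mem S v, hset]
    simp only [Set.mem_setOf_eq]
    constructor
    · rintro ⟨i, hi, hfi⟩
      exact ⟨i, hi, by rw [hfi, flip2_flip2]⟩
    · rintro ⟨i, hi, hfi⟩
      exact ⟨i, hi, by rw [← hfi, flip2_flip2]⟩
  · intro i hi
    rw [md_flip]
    exact hmd i hi
  · intro i hi
    have := hperp i hi
    simp only [flip2]
    linear_combination this

lemma disc_flip (S : Set (ℤ × ℤ)) (h : DisconnectedStepGraph (flip2 '' S)) :
    DisconnectedStepGraph S := by
  obtain ⟨⟨a, ha, b, hb, hab⟩, hcoord, hdiag, hthree⟩ := h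
  refine ⟨?_, ?_, ?_, ?_⟩
  · obtain ⟨a', ha', rfl⟩ := ha
    obtain ⟨b', hb', rfl⟩ := hb
    exact ⟨a', ha', b', hb', fun h => hab (by rw [h])⟩
  · intro a ha b hb hab
    have := hcoord (flip2 a) ((flip2_mem S a).1 ha) (flip2 b) ((flip2_mem S b).1 hb)
      (fun h => hab (flip2_inj _ _ h))
    simpa only [flip2, ne_eq, neg_inj] using this
  · intro a ha
    obtain ⟨b, hb, hDb⟩ := hdiag (flip2 a) ((flip2_mem S a).1 ha)
    obtain ⟨b', hb', rfl⟩ := hb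
    exact ⟨b', hb', (diag_flip a b').1 hDb⟩
  · intro a ha b hb c hc d hd h1 h2 h3
    rcases hthree (flip2 a) ((flip2_mem S a).1 ha) (flip2 b) ((flip2_mem S b).1 hb)
      (flip2 c) ((flip2_mem S c).1 hc) (flip2 d) ((flip2_mem S d).1 hd)
      ((diag_flip a b).2 h1) ((diag_flip a c).2 h2) ((diag_flip a d).2 h3) with h | h | h
    · exact Or.inl (flip2_inj _ _ h)
    · exact Or.inr (Or.inl (flip2_inj _ _ h))
    · exact Or.inr (Or.inr (flip2_inj _ _ h))

lemma four_flip (S : Set (ℤ × ℤ)) (h : FourCycle (flip2 '' S)) : FourCycle S := by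
  obtain ⟨c, hc⟩ := h
  refine ⟨(c.1, -c.2 - 1), ?_⟩
  ext v
  rw [flip2_mem S v, hc]
  simp only [Set.mem_insert_iff, Set.mem_singleton_iff, Prod.ext_iff, flip2]
  omega

lemma classify (S : Set (ℤ × ℤ)) (L1 U1 L2 U2 : ℤ)
    (hS : S = {v : ℤ × ℤ | L1 ≤ v.1+v.2 ∧ v.1+v.2 ≤ U1 ∧ L2 ≤ v.1-v.2 ∧ v.1-v.2 ≤ U2})
    (hne : ∃ v, v ∈ S)
    (hmin : ∀ x y : ℤ, ¬(L1+1 ≤ x+y ∧ x+y ≤ U1-1 ∧ L2+1 ≤ x-y ∧ x-y ≤ U2-1)) :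
    StepGraph S ∨ DisconnectedStepGraph S ∨ FourCycle S := by
  obtain ⟨v0, hv0⟩ := hne
  have hv0' : L1 ≤ v0.1+v0.2 ∧ v0.1+v0.2 ≤ U1 ∧ L2 ≤ v0.1-v0.2 ∧ v0.1-v0.2 ≤ U2 := by
    rw [hS] at hv0; exact hv0
  have hSf : flip2 '' S = {v : ℤ × ℤ |
      L2 ≤ v.1+v.2 ∧ v.1+v.2 ≤ U2 ∧ L1 ≤ v.1-v.2 ∧ v.1-v.2 ≤ U1} := by
    ext v
    rw [mem_flip_image, hS]
    simp only [Set.mem_setOf_eq, flip2]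
    omega
  have hnef : ∃ v, v ∈ flip2 '' S := ⟨flip2 v0, Set.mem_image_of_mem _ hv0⟩
  by_cases hU1 : U1 = L1
  · subst hU1
    rcases chain_case S U1 L2 U2 hS ⟨v0, hv0⟩ with h | h
    · exact Or.inl h
    · exact Or.inr (Or.inl h)
  · by_cases hU2 : U2 = L2
    · subst hU2
      rcases chain_case (flip2 '' S) U2 L1 U1 hSf hnef with h | h
      · exact Or.inl (stepGraph_flip S h)
      · exact Or.inr (Or.inl (disc_flip S h))
    · by_cases hU1' : U1 = L1 + 1
      · subst hU1'
        exact Or.inl (stair_case S L1 L2 U2 (by omega) hS)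
      · by_cases hU2' : U2 = L2 + 1
        · subst hU2'
          exact Or.inl (stepGraph_flip S (stair_case (flip2 '' S) L2 L1 U1 (by omega) hSf))
        · refine Or.inr (Or.inr (four_case S L1 U1 L2 U2 hS (by omega) (by omega) hmin))

/-- The set `V_M(R)` of min-max nodes is one of: a step-graph, a
disconnected step-graph, or a cycle of length four. -/
theorem stmt_16 (R : Finset (ℤ × ℤ)) (hR : R.Nonempty) :
    StepGraph {v : ℤ × ℤ | IsMinMax R v} ∨
    DisconnectedStepGraph {v : ℤ × ℤ | IsMinMax R v} ∨
    FourCycle {v : ℤ × ℤ | IsMinMax R v} := by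
  obtain ⟨E, hE⟩ : ∃ E, E = sInf (Set.range (ecc R)) := ⟨_, rfl⟩
  obtain ⟨v0, hv0⟩ : ∃ v0, ecc R v0 = E := by
    rw [hE]
    exact Nat.sInf_mem (Set.range_nonempty _)
  have hle : ∀ v, E ≤ ecc R v := by
    intro v
    rw [hE]
    exact Nat.sInf_le ⟨v, rfl⟩
  have hMM : ∀ v, IsMinMax R v ↔ ecc R v ≤ E := by
    intro v
    constructor
    · intro h
      exact hv0 ▸ h v0
    · intro h v'
      exact le_trans h (hle v')
  have hS : {v : ℤ × ℤ | IsMinMax R v} = {v : ℤ × ℤ |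
      R.sup' hR (fun u => u.1+u.2) - E ≤ v.1+v.2 ∧
      v.1+v.2 ≤ R.inf' hR (fun u => u.1+u.2) + E ∧
      R.sup' hR (fun u => u.1-u.2) - E ≤ v.1-v.2 ∧
      v.1-v.2 ≤ R.inf' hR (fun u => u.1-u.2) + E} := by
    ext v
    simp only [Set.mem_setOf_eq]
    rw [hMM v, ecc_le_iff R hR v E]
    omega
  have hne : ∃ v, v ∈ {v : ℤ × ℤ | IsMinMax R v} :=
    ⟨v0, (hMM v0).2 (le_of_eq hv0)⟩
  obtain ⟨u0, hu0⟩ := id hR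
  have ha : R.inf' hR (fun u => u.1+u.2) ≤ R.sup' hR (fun u => u.1+u.2) :=
    le_trans (Finset.inf'_le (fun u : ℤ × ℤ => u.1+u.2) hu0)
      (Finset.le_sup' (fun u : ℤ × ℤ => u.1+u.2) hu0)
  have hb : R.inf' hR (fun u => u.1-u.2) ≤ R.sup' hR (fun u => u.1-u.2) :=
    le_trans (Finset.inf'_le (fun u : ℤ × ℤ => u.1-u.2) hu0)
      (Finset.le_sup' (fun u : ℤ × ℤ => u.1-u.2) hu0)
  apply classify _ _ _ _ _ hS hne
  intro x y hxy
  rcases Nat.eq_zero_or_pos E with h0 | h0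
  · rw [h0] at hxy
    push_cast at hxy
    omega
  · have h1 := hle (x, y)
    have h2 : ¬ ecc R (x, y) ≤ E - 1 := by omega
    rw [ecc_le_iff R hR (x, y) (E-1)] at h2
    simp only at h2
    omega
end

section
/- Suppose R is invariant under the reflection σ(x,y) = (a − x, y) for some integer a (a vertical axis of symmetry x = a/2), or under the reflection σ(x,y) = (x, a − y) for some integer a (a horizontal axis of symmetry y = a/2), and suppose V_M(R) = {c, c+(1,0), c+(0,1), c+(1,1)} for some grid node c (the min-max nodes form a four-cycle). Then a is odd; that is, the axis of symmetry does not pass through any grid node and the reflection is a partitive automorphism of the configuration. -/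
lemma ecc_le_v {R : Finset (ℤ × ℤ)} {a : ℤ}
    (hs : ∀ v ∈ R, ((a - v.1, v.2) : ℤ × ℤ) ∈ R) (v : ℤ × ℤ) :
    ecc R (a - v.1, v.2) ≤ ecc R v := by
  apply Finset.sup_le
  intro u hu
  have h2 := hs u hu
  have h3 : md u (a - v.1, v.2) = md (a - u.1, u.2) v := by
    simp only [md]; omega
  rw [h3]
  exact Finset.le_sup (f := fun u => md u v) h2

lemma ecc_eq_v {R : Finset (ℤ × ℤ)} {a : ℤ}
    (hs : ∀ v ∈ R, ((a - v.1, v.2) : ℤ × ℤ) ∈ R) (v : ℤ × ℤ) :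
    ecc R (a - v.1, v.2) = ecc R v := by
  refine le_antisymm (ecc_le_v hs v) ?_
  have := ecc_le_v hs (a - v.1, v.2)
  simpa using this

lemma ecc_le_h {R : Finset (ℤ × ℤ)} {a : ℤ}
    (hs : ∀ v ∈ R, ((v.1, a - v.2) : ℤ × ℤ) ∈ R) (v : ℤ × ℤ) :
    ecc R (v.1, a - v.2) ≤ ecc R v := by
  apply Finset.sup_le
  intro u hu
  have h2 := hs u hu
  have h3 : md u (v.1, a - v.2) = md (u.1, a - u.2) v := by
    simp only [md]; omega
  rw [h3]
  exact Finset.le_sup (f := fun u => md u v) h2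

lemma ecc_eq_h {R : Finset (ℤ × ℤ)} {a : ℤ}
    (hs : ∀ v ∈ R, ((v.1, a - v.2) : ℤ × ℤ) ∈ R) (v : ℤ × ℤ) :
    ecc R (v.1, a - v.2) = ecc R v := by
  refine le_antisymm (ecc_le_h hs v) ?_
  have := ecc_le_h hs (v.1, a - v.2)
  simpa using this

/-- If `R` is invariant under the reflection `(x,y) ↦ (a−x, y)`
(vertical axis `x = a/2`) or under `(x,y) ↦ (x, a−y)` (horizontal axis
`y = a/2`), and the min-max nodes of `R` form a four-cycle
`{c, c+(1,0), c+(0,1), c+(1,1)}`, then `a` is odd: the axis passes through no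
grid node, so the reflection is a partitive automorphism. -/
theorem stmt_17 (R : Finset (ℤ × ℤ)) (hR : R.Nonempty) (a : ℤ)
    (hsym : (∀ v ∈ R, ((a - v.1, v.2) : ℤ × ℤ) ∈ R) ∨
            (∀ v ∈ R, ((v.1, a - v.2) : ℤ × ℤ) ∈ R))
    (c : ℤ × ℤ)
    (hV : {v : ℤ × ℤ | IsMinMax R v} =
      {c, (c.1 + 1, c.2), (c.1, c.2 + 1), (c.1 + 1, c.2 + 1)}) :
    Odd a := by
  have hmem : ∀ v : ℤ × ℤ, IsMinMax R v ↔
      (v = c ∨ v = (c.1 + 1, c.2) ∨ v = (c.1, c.2 + 1) ∨ v = (c.1 + 1, c.2 + 1)) := by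
    intro v
    constructor
    · intro h
      have : v ∈ {v : ℤ × ℤ | IsMinMax R v} := h
      rw [hV] at this
      simpa [Set.mem_insert_iff] using this
    · intro h
      have : v ∈ ({c, (c.1 + 1, c.2), (c.1, c.2 + 1), (c.1 + 1, c.2 + 1)} :
          Set (ℤ × ℤ)) := by simpa [Set.mem_insert_iff] using h
      rw [← hV] at this
      exact this
  rcases hsym with hs | hs
  · -- vertical reflection
    have hmmc : IsMinMax R c := (hmem c).2 (Or.inl rfl)
    have hmmc1 : IsMinMax R (c.1 + 1, c.2) := (hmem _).2 (Or.inr (Or.inl rfl))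
    have hσ : ∀ v : ℤ × ℤ, IsMinMax R v → IsMinMax R (a - v.1, v.2) := by
      intro v hv v'
      rw [ecc_eq_v hs v]
      exact hv v'
    have h1 := (hmem _).1 (hσ c hmmc)
    have h2 := (hmem _).1 (hσ (c.1 + 1, c.2) hmmc1)
    simp only [Prod.ext_iff, Prod.mk.injEq] at h1 h2
    rcases h1 with ⟨h, _⟩ | ⟨h, _⟩ | ⟨h, h'⟩ | ⟨h, h'⟩ <;>
      rcases h2 with ⟨g, _⟩ | ⟨g, _⟩ | ⟨g, g'⟩ | ⟨g, g'⟩ <;>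
      · rw [Int.odd_iff]; omega
  · -- horizontal reflection
    have hmmc : IsMinMax R c := (hmem c).2 (Or.inl rfl)
    have hmmc1 : IsMinMax R (c.1, c.2 + 1) := (hmem _).2 (Or.inr (Or.inr (Or.inl rfl)))
    have hσ : ∀ v : ℤ × ℤ, IsMinMax R v → IsMinMax R (v.1, a - v.2) := by
      intro v hv v'
      rw [ecc_eq_h hs v]
      exact hv v'
    have h1 := (hmem _).1 (hσ c hmmc)
    have h2 := (hmem _).1 (hσ (c.1, c.2 + 1) hmmc1)
    simp only [Prod.ext_iff, Prod.mk.injEq] at h1 h2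
    rcases h1 with ⟨_, h⟩ | ⟨_, h⟩ | ⟨h', h⟩ | ⟨h', h⟩ <;>
      rcases h2 with ⟨_, g⟩ | ⟨_, g⟩ | ⟨g', g⟩ | ⟨g', g⟩ <;>
      · rw [Int.odd_iff]; omega
end

section
/- Suppose R is invariant under the point reflection σ(v) = p − v for some p ∈ ℤ × ℤ (a rotational symmetry by 180° about the point p/2), and suppose V_M(R) = {c, c+(1,0), c+(0,1), c+(1,1)} for some grid node c (the min-max nodes form a four-cycle). Then p₁ and p₂ are not both even; that is, the center of rotation p/2 is not a grid node (it is the midpoint of an edge or the center of a unit square), so the rotation is a partitive automorphism of the configuration. -/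
lemma ecc_refl (R : Finset (ℤ × ℤ)) (p : ℤ × ℤ)
    (hsym : ∀ v ∈ R, ((p.1 - v.1, p.2 - v.2) : ℤ × ℤ) ∈ R) (v : ℤ × ℤ) :
    ecc R ((p.1 - v.1, p.2 - v.2) : ℤ × ℤ) ≤ ecc R v := by
  apply Finset.sup_le
  intro u hu
  have h1 : ((p.1 - u.1, p.2 - u.2) : ℤ × ℤ) ∈ R := hsym u hu
  have : md u (p.1 - v.1, p.2 - v.2) = md (p.1 - u.1, p.2 - u.2) v := by
    simp only [md]
    congr 1 <;> [skip; skip] <;> omega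
  rw [this]
  exact Finset.le_sup (f := fun u => md u v) h1

lemma minmax_refl (R : Finset (ℤ × ℤ)) (p : ℤ × ℤ)
    (hsym : ∀ v ∈ R, ((p.1 - v.1, p.2 - v.2) : ℤ × ℤ) ∈ R) (v : ℤ × ℤ)
    (h : IsMinMax R v) : IsMinMax R ((p.1 - v.1, p.2 - v.2) : ℤ × ℤ) := by
  intro v'
  exact le_trans (ecc_refl R p hsym v) (h v')

/-- If `R` is invariant under the point reflection `v ↦ p − v`
(rotation by 180° about `p/2`) and the min-max nodes of `R` form a four-cycle
`{c, c+(1,0), c+(0,1), c+(1,1)}`, then `p₁` and `p₂` are not both even: the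
center of rotation is not a grid node, so the rotation is a partitive
automorphism. -/
theorem stmt_18 (R : Finset (ℤ × ℤ)) (hR : R.Nonempty) (p : ℤ × ℤ)
    (hsym : ∀ v ∈ R, ((p.1 - v.1, p.2 - v.2) : ℤ × ℤ) ∈ R)
    (c : ℤ × ℤ)
    (hV : {v : ℤ × ℤ | IsMinMax R v} =
      {c, (c.1 + 1, c.2), (c.1, c.2 + 1), (c.1 + 1, c.2 + 1)}) :
    ¬ (Even p.1 ∧ Even p.2) := by
  have key : ∀ v : ℤ × ℤ, IsMinMax R v ↔
      (v = c ∨ v = (c.1 + 1, c.2) ∨ v = (c.1, c.2 + 1) ∨ v = (c.1 + 1, c.2 + 1)) := by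
    intro v
    have := Set.ext_iff.mp hV v
    simpa [Set.mem_insert_iff, Set.mem_singleton_iff] using this
  have hc : IsMinMax R c := (key c).mpr (Or.inl rfl)
  have hd : IsMinMax R ((c.1 + 1, c.2 + 1) : ℤ × ℤ) :=
    (key _).mpr (Or.inr (Or.inr (Or.inr rfl)))
  have h1 := (key _).mp (minmax_refl R p hsym c hc)
  have h2 := (key _).mp (minmax_refl R p hsym _ hd)
  simp only [Prod.ext_iff] at h1 h2
  rintro ⟨⟨a, ha⟩, ⟨b, hb⟩⟩
  omega
end

section
/- Suppose R is invariant under the point reflection σ(v) = p − v for some p ∈ ℤ × ℤ (a rotational symmetry by 180° about the point p/2), suppose V_M(R) is a disconnected step-graph, and suppose |V_M(R)| is even. Then p₁ and p₂ are not both even; that is, the center of rotation p/2 is not a grid node, so the rotation is a partitive automorphism of the configuration. -/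
/-- If `R` is invariant under the point reflection `v ↦ p − v`
(rotation by 180° about `p/2`), the set of min-max nodes of `R` is a
disconnected step-graph, and `|V_M(R)|` is even, then `p₁` and `p₂` are not
both even: the center of rotation is not a grid node, so the rotation is a
partitive automorphism. -/
theorem stmt_19 (R : Finset (ℤ × ℤ)) (hR : R.Nonempty) (p : ℤ × ℤ)
    (hsym : ∀ v ∈ R, ((p.1 - v.1, p.2 - v.2) : ℤ × ℤ) ∈ R)
    (hstep : DisconnectedStepGraph {v : ℤ × ℤ | IsMinMax R v})
    (hfin : {v : ℤ × ℤ | IsMinMax R v}.Finite)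
    (heven : Even {v : ℤ × ℤ | IsMinMax R v}.ncard) :
    ¬ (Even p.1 ∧ Even p.2) := by
  rintro ⟨hp1, hp2⟩
  set S : Set (ℤ × ℤ) := {v : ℤ × ℤ | IsMinMax R v} with hSdef
  -- eccentricity is invariant under the point reflection
  have hecc_le : ∀ v : ℤ × ℤ, ecc R (p.1 - v.1, p.2 - v.2) ≤ ecc R v := by
    intro v
    apply Finset.sup_le
    intro u hu
    have h1 : ((p.1 - u.1, p.2 - u.2) : ℤ × ℤ) ∈ R := hsym u hu
    have h2 : md u (p.1 - v.1, p.2 - v.2) = md (p.1 - u.1, p.2 - u.2) v := by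
      simp only [md]; omega
    rw [h2]
    exact Finset.le_sup (f := fun u => md u v) h1
  have hecc : ∀ v : ℤ × ℤ, ecc R (p.1 - v.1, p.2 - v.2) = ecc R v := by
    intro v
    refine le_antisymm (hecc_le v) ?_
    have := hecc_le (p.1 - v.1, p.2 - v.2)
    simpa using this
  have hsigma : ∀ v ∈ S, ((p.1 - v.1, p.2 - v.2) : ℤ × ℤ) ∈ S := by
    intro v hv
    simp only [hSdef, Set.mem_setOf_eq, IsMinMax] at hv ⊢
    intro v'
    rw [hecc]
    exact hv v'
  -- a fixed min-max node and the optimal eccentricity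
  obtain ⟨w0, hw0, -, -, -⟩ := hstep.1
  have hw0' : ∀ v' : ℤ × ℤ, ecc R w0 ≤ ecc R v' := hw0
  set E : ℕ := ecc R w0 with hEdef
  have hmemS : ∀ v : ℤ × ℤ, v ∈ S ↔ ecc R v ≤ E := by
    intro v
    constructor
    · intro hv; exact hv w0
    · intro hv
      simp only [hSdef, Set.mem_setOf_eq, IsMinMax]
      intro v'
      exact le_trans hv (hw0' v')
  -- membership criterion in rotated coordinates
  have hcrit : ∀ v : ℤ × ℤ, v ∈ S ↔ ∀ u ∈ R,
      ((u.1 + u.2) - (v.1 + v.2)).natAbs ≤ E ∧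
      ((u.1 - u.2) - (v.1 - v.2)).natAbs ≤ E := by
    intro v
    rw [hmemS v]
    unfold ecc
    rw [Finset.sup_le_iff]
    constructor
    · intro h u hu
      have := h u hu
      simp only [md] at this
      omega
    · intro h u hu
      have := h u hu
      simp only [md]
      omega
  have hdist := hstep.2.1
  -- dichotomy: on S, either v.1+v.2 is constant or v.1-v.2 is constant
  have hdich : (∀ vs ∈ S, ∀ ws ∈ S, vs.1 + vs.2 = ws.1 + ws.2) ∨
      (∀ vs ∈ S, ∀ ws ∈ S, vs.1 - vs.2 = ws.1 - ws.2) := by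
    by_contra hcon
    push_neg at hcon
    obtain ⟨⟨x1, hx1, x2, hx2, hxs⟩, ⟨y1, hy1, y2, hy2, hys⟩⟩ := hcon
    obtain ⟨a, ha, b, hb, hab⟩ : ∃ a ∈ S, ∃ b ∈ S, a.1 + a.2 < b.1 + b.2 := by
      rcases hxs.lt_or_gt with h | h
      exacts [⟨x1, hx1, x2, hx2, h⟩, ⟨x2, hx2, x1, hx1, h⟩]
    obtain ⟨c, hc, d, hd, hcd⟩ : ∃ c ∈ S, ∃ d ∈ S, c.1 - c.2 < d.1 - d.2 := by
      rcases hys.lt_or_gt with h | h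
      exacts [⟨y1, hy1, y2, hy2, h⟩, ⟨y2, hy2, y1, hy1, h⟩]
    by_cases hcase : c.1 + c.2 < b.1 + b.2
    · -- z := (c.1 + 1, c.2) is a min-max node sharing second coordinate with c
      have hz : ((c.1 + 1, c.2) : ℤ × ℤ) ∈ S := by
        rw [hcrit]
        intro u hu
        have h1 := (hcrit c).1 hc u hu
        have h2 := (hcrit b).1 hb u hu
        have h3 := (hcrit d).1 hd u hu
        constructor <;> omega
      have hne : ((c.1 + 1, c.2) : ℤ × ℤ) ≠ c := by
        intro h
        have := congrArg Prod.fst h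
        simp at this
      have := (hdist _ hz c hc hne).2
      simp at this
    · -- z := (c.1, c.2 - 1) is a min-max node sharing first coordinate with c
      push_neg at hcase
      have hac : a.1 + a.2 < c.1 + c.2 := lt_of_lt_of_le hab hcase
      have hz : ((c.1, c.2 - 1) : ℤ × ℤ) ∈ S := by
        rw [hcrit]
        intro u hu
        have h1 := (hcrit c).1 hc u hu
        have h2 := (hcrit a).1 ha u hu
        have h3 := (hcrit d).1 hd u hu
        constructor <;> omega
      have hne : ((c.1, c.2 - 1) : ℤ × ℤ) ≠ c := by
        intro h
        have := congrArg Prod.snd h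
        simp at this
      have := (hdist _ hz c hc hne).1
      simp at this
  -- the first coordinates of S are "convex"
  have hconv : ∀ v ∈ S, ∀ w ∈ S, ∀ x : ℤ, v.1 ≤ x → x ≤ w.1 → ∃ z ∈ S, z.1 = x := by
    intro v hv w hw x hvx hxw
    rcases hdich with hcst | hcst
    · refine ⟨(x, v.1 + v.2 - x), ?_, rfl⟩
      rw [hcrit]
      intro u hu
      have h1 := (hcrit v).1 hv u hu
      have h2 := (hcrit w).1 hw u hu
      have h3 := hcst v hv w hw
      constructor <;> simp only [] <;> omega
    · refine ⟨(x, v.2 + (x - v.1)), ?_, rfl⟩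
      rw [hcrit]
      intro u hu
      have h1 := (hcrit v).1 hv u hu
      have h2 := (hcrit w).1 hw u hu
      have h3 := hcst v hv w hw
      constructor <;> simp only [] <;> omega
  -- finset of first coordinates
  set F : Finset (ℤ × ℤ) := hfin.toFinset with hFdef
  have hFmem : ∀ v : ℤ × ℤ, v ∈ F ↔ v ∈ S := fun v => hfin.mem_toFinset
  have hFne : F.Nonempty := ⟨w0, (hFmem w0).2 hw0⟩
  set F1 : Finset ℤ := F.image Prod.fst with hF1def
  have hF1ne : F1.Nonempty := hFne.image _
  set A : ℤ := F1.min' hF1ne with hA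
  set B : ℤ := F1.max' hF1ne with hB
  have hAB : A ≤ B := F1.min'_le _ (F1.max'_mem hF1ne)
  obtain ⟨va, hvaF, hva1⟩ : ∃ va ∈ F, va.1 = A :=
    Finset.mem_image.1 (F1.min'_mem hF1ne)
  obtain ⟨vb, hvbF, hvb1⟩ : ∃ vb ∈ F, vb.1 = B :=
    Finset.mem_image.1 (F1.max'_mem hF1ne)
  have hvaS : va ∈ S := (hFmem va).1 hvaF
  have hvbS : vb ∈ S := (hFmem vb).1 hvbF
  -- F1 is an interval
  have hicc : F1 = Finset.Icc A B := by
    ext x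
    constructor
    · intro hx
      exact Finset.mem_Icc.2 ⟨F1.min'_le x hx, F1.le_max' x hx⟩
    · intro hx
      obtain ⟨hax, hxb⟩ := Finset.mem_Icc.1 hx
      obtain ⟨z, hzS, hz1⟩ := hconv va hvaS vb hvbS x (hva1 ▸ hax) (hvb1 ▸ hxb)
      exact Finset.mem_image.2 ⟨z, (hFmem z).2 hzS, hz1⟩
  -- cardinality
  have hinj : Set.InjOn Prod.fst (F : Set (ℤ × ℤ)) := by
    intro v hv w hw h
    by_contra hne
    exact (hdist v ((hFmem v).1 hv) w ((hFmem w).1 hw) hne).1 h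
  have hcard1 : S.ncard = F.card := Set.ncard_eq_toFinset_card _ hfin
  have hcard2 : F.card = F1.card := (Finset.card_image_of_injOn hinj).symm
  have hcard3 : F1.card = (B + 1 - A).toNat := by rw [hicc]; exact Int.card_Icc A B
  have hevenN : Even ((B + 1 - A).toNat) := by
    rw [← hcard3, ← hcard2, ← hcard1]; exact heven
  -- symmetry: p.1 = A + B
  have h1 : p.1 - va.1 ≤ B := by
    have : ((p.1 - va.1, p.2 - va.2) : ℤ × ℤ) ∈ S := hsigma va hvaS
    have hm : p.1 - va.1 ∈ F1 :=
      Finset.mem_image.2 ⟨_, (hFmem _).2 this, rfl⟩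
    exact F1.le_max' _ hm
  have h2 : A ≤ p.1 - vb.1 := by
    have : ((p.1 - vb.1, p.2 - vb.2) : ℤ × ℤ) ∈ S := hsigma vb hvbS
    have hm : p.1 - vb.1 ∈ F1 :=
      Finset.mem_image.2 ⟨_, (hFmem _).2 this, rfl⟩
    exact F1.min'_le _ hm
  rw [hva1] at h1
  rw [hvb1] at h2
  -- conclude: p.1 = A + B is odd since B - A is odd
  rw [Int.even_iff] at hp1
  rw [Nat.even_iff] at hevenN
  omega
end
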